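/- arXiv:2203.10695 — 11 statements merged into one kernel-verified Lean document; each statement's English description precedes it below -/
import Mathlib

section
/- Let Φ be an irreducible, positive, trace preserving linear map on M_n(ℂ) with invariant state π, and let Ω(X) = Tr(X)·π. Then the linear map I − Φ + Ω on M_n(ℂ) is invertible (where I is the identity map on M_n(ℂ)). -/
/-!
A positive map commutes with the adjoint, so it suffices to show that every self-adjoint fixed
point `H` is a multiple of `π`.

A nonzero positive fixed point `ρ` is positive definite: if `p` is its support projection, then
`ε • p ≤ ρ` for some `ε > 0`, so every positive element of the corner `p M p` is dominated by a
multiple of `ρ`, and so is its image under `Φ`; an element squeezed between `0` and a multiple of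
`ρ` lies in `p M p` again. Hence `Φ` preserves `p M p`, and irreducibility forces `p = 1`.

In particular `π` is positive definite. Taking for `c` the top of the spectrum of
`π^(-1/2) H π^(-1/2)`, the fixed point `c • π - H` is positive but singular, hence zero.
Finally, an element of the kernel of `I - Φ + Ω` has trace zero, so it is a fixed point of
trace zero, hence zero.
-/

open Matrix ComplexOrder
open scoped MatrixOrder ComplexStarModule

lemma PositiveLinearMap.map_star {E F : Type*} [AddCommGroup E] [PartialOrder E]
    [StarAddMonoid E] [Module ℂ E] [StarModule ℂ E] [SelfAdjointDecompose E]
    [NonUnitalRing F] [PartialOrder F] [StarRing F] [StarOrderedRing F] [Module ℂ F]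
    [StarModule ℂ F] (f : E →ₚ[ℂ] F) (x : E) : f (star x) = star (f x) := by
  have hre := (ℜ x).2.map' f
  have him := (ℑ x).2.map' f
  conv_lhs => rw [← realPart_add_I_smul_imaginaryPart x]
  conv_rhs => rw [← realPart_add_I_smul_imaginaryPart x]
  simp [hre.star_eq, him.star_eq, (ℜ x).2.star_eq, (ℑ x).2.star_eq]

lemma Set.Finite.exists_pos_le_of_pos {s : Set ℝ} (hs : s.Finite) :
    ∃ ε > 0, ∀ x ∈ s, 0 < x → ε ≤ x := by
  by_cases hne : (s ∩ Set.Ioi 0).Nonempty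
  · obtain ⟨ε, ⟨-, hε⟩, hmin⟩ := Set.exists_min_image _ id (hs.inter_of_left _) hne
    exact ⟨ε, hε, fun x hx hx0 => hmin x ⟨hx, hx0⟩⟩
  · exact ⟨1, one_pos, fun x hx hx0 => absurd ⟨x, hx, hx0⟩ hne⟩

namespace Matrix

variable {ι : Type*} [Fintype ι] [DecidableEq ι]

lemma exists_isStarProjection_smul_le {ρ : Matrix ι ι ℂ} (hρ : 0 ≤ ρ) :
    ∃ p : Matrix ι ι ℂ, IsStarProjection p ∧ p * ρ = ρ ∧ ∃ ε : ℝ, 0 < ε ∧ ε • p ≤ ρ := by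
  set f : ℝ → ℝ := fun x => if 0 < x then 1 else 0
  have hcont (g : ℝ → ℝ) : ContinuousOn g (spectrum ℝ ρ) := ρ.finite_real_spectrum.continuousOn g
  have hspec := spectrum_nonneg_of_nonneg (𝕜 := ℝ) hρ
  obtain ⟨ε, hε, hεle⟩ := ρ.finite_real_spectrum.exists_pos_le_of_pos
  refine ⟨cfc f ρ, ⟨?_, cfc_predicate f ρ⟩, ?_, ε, hε, ?_⟩
  · rw [IsIdempotentElem, ← cfc_mul f f ρ (hcont f) (hcont f)]
    exact cfc_congr fun x _ => by simp only [f]; split_ifs <;> simp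
  · calc cfc f ρ * ρ = cfc (fun x => f x * x) ρ := by
          rw [cfc_mul f (fun x => x) ρ (hcont f) (hcont _), cfc_id' ℝ ρ]
      _ = cfc (fun x => x) ρ := cfc_congr fun x hx => by
          simp only [f]
          split_ifs with h
          · simp
          · simp [le_antisymm (not_lt.mp h) (hspec hx)]
      _ = ρ := cfc_id' ℝ ρ
  · conv_rhs => rw [← cfc_id' ℝ ρ]
    rw [← cfc_smul ε f ρ (hcont f)]
    refine cfc_mono (fun x hx => ?_) (hcont _) (hcont _)
    simp only [f, smul_eq_mul]
    split_ifs with h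
    · simpa using hεle x hx h
    · simpa using hspec hx

lemma mul_eq_zero_of_mul_mul_eq_zero {A q : Matrix ι ι ℂ} (hA : 0 ≤ A) (hq : IsSelfAdjoint q)
    (h : q * A * q = 0) : A * q = 0 := by
  rw [← CFC.sqrt_mul_sqrt_self A hA] at h ⊢
  have hs : IsSelfAdjoint (CFC.sqrt A) := (CFC.sqrt_nonneg A).isSelfAdjoint
  have : star (CFC.sqrt A * q) * (CFC.sqrt A * q) = 0 := by
    rw [star_mul, hs.star_eq, hq.star_eq, ← h]
    noncomm_ring
  rw [mul_assoc, conjTranspose_mul_self_eq_zero.mp this, mul_zero]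

lemma mul_mul_eq_self_of_le_smul {p ρ A : Matrix ι ι ℂ} (hp : IsStarProjection p)
    (hpρ : p * ρ = ρ) (hA : 0 ≤ A) {c : ℝ} (hAρ : A ≤ c • ρ) : p * A * p = A := by
  set q := 1 - p
  have hq : IsStarProjection q := hp.one_sub
  have hqρ : q * ρ = 0 := by simp [q, sub_mul, hpρ]
  have hqAq : q * A * q = 0 := by
    refine le_antisymm ?_ (conjugate_nonneg_of_nonneg hA hq.nonneg)
    calc q * A * q ≤ q * (c • ρ) * q := conjugate_le_conjugate_of_nonneg hAρ hq.nonneg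
      _ = 0 := by rw [mul_smul_comm, hqρ, smul_zero, zero_mul]
  have hAq : A * q = 0 := mul_eq_zero_of_mul_mul_eq_zero hA hq.isSelfAdjoint hqAq
  have hqA : q * A = 0 := by
    simpa [hq.isSelfAdjoint.star_eq, hA.star_eq] using congrArg star hAq
  have hpq : p = 1 - q := by simp [q]
  rw [hpq, sub_mul, one_mul, hqA, sub_zero, mul_sub, mul_one, hAq, sub_zero]

lemma PosDef.exists_nonneg_sub_not_isUnit [Nonempty ι] {π H : Matrix ι ι ℂ} (hπ : π.PosDef)
    (hH : IsSelfAdjoint H) : ∃ c : ℝ, 0 ≤ c • π - H ∧ ¬IsUnit (c • π - H) := by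
  set S := CFC.sqrt π
  have hS : IsSelfAdjoint S := (CFC.sqrt_nonneg π).isSelfAdjoint
  have hSS : S * S = π := CFC.sqrt_mul_sqrt_self π hπ.posSemidef.nonneg
  have hSu : IsUnit S := (CFC.isUnit_sqrt_iff π hπ.posSemidef.nonneg).mpr hπ.isUnit
  have hSdet := (isUnit_iff_isUnit_det S).mp hSu
  set B := S⁻¹ * H * S⁻¹
  have hB : IsSelfAdjoint B := by
    have hS' : IsSelfAdjoint S⁻¹ := IsHermitian.inv hS
    simp [IsSelfAdjoint, B, star_mul, hS'.star_eq, hH.star_eq, mul_assoc]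
  obtain ⟨c, hc, hmax⟩ := Set.exists_max_image (spectrum ℝ B) id B.finite_real_spectrum
    (ContinuousFunctionalCalculus.spectrum_nonempty B hB)
  have hconj : c • π - H = S * (algebraMap ℝ _ c - B) * S := by
    simp only [B, Algebra.algebraMap_eq_smul_one, mul_sub, sub_mul, mul_smul_comm, smul_mul_assoc,
      mul_one, hSS, ← mul_assoc, mul_nonsing_inv S hSdet, one_mul]
    rw [mul_assoc H, nonsing_inv_mul S hSdet, mul_one]
  have hconj' : algebraMap ℝ _ c - B = S⁻¹ * (c • π - H) * S⁻¹ := by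
    rw [hconj, ← mul_assoc, ← mul_assoc, nonsing_inv_mul S hSdet, one_mul, mul_assoc,
      mul_nonsing_inv S hSdet, mul_one]
  refine ⟨c, ?_, fun hu => spectrum.mem_iff.mp hc ?_⟩
  · have hle : 0 ≤ algebraMap ℝ _ c - B := sub_nonneg.mpr (le_algebraMap_of_spectrum_le hmax hB)
    simpa [hconj, hS.star_eq] using star_right_conjugate_nonneg hle S
  · have hS'u : IsUnit S⁻¹ := isUnit_nonsing_inv_iff.mpr hSu
    rw [hconj']
    exact (hS'u.mul hu).mul hS'u

end Matrix

namespace PositiveLinearMap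

open Function

variable {ι : Type*} [Fintype ι] [DecidableEq ι] (Φ : Matrix ι ι ℂ →ₚ[ℂ] Matrix ι ι ℂ)

def PreservesCorner (p : Matrix ι ι ℂ) : Prop :=
  ∀ X, Φ (p * X * p) = p * Φ (p * X * p) * p

def IsIrreducible : Prop :=
  ∀ p : Matrix ι ι ℂ, IsStarProjection p → Φ.PreservesCorner p → p = 0 ∨ p = 1

lemma preservesCorner_of_smul_le {ρ p : Matrix ι ι ℂ} (hρ : IsFixedPt Φ ρ)
    (hp : IsStarProjection p) (hpρ : p * ρ = ρ) {ε : ℝ} (hε : 0 < ε) (hερ : ε • p ≤ ρ) :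
    Φ.PreservesCorner p := by
  suffices h : ∀ Y, 0 ≤ Y → Φ (p * Y * p) = p * Φ (p * Y * p) * p by
    intro X
    have := LinearMap.ext_on (f := Φ.toLinearMap ∘ₗ LinearMap.mulLeftRight ℂ (p, p))
      (g := LinearMap.mulLeftRight ℂ (p, p) ∘ₗ Φ.toLinearMap ∘ₗ LinearMap.mulLeftRight ℂ (p, p))
      CStarAlgebra.span_nonneg h
    simpa using LinearMap.congr_fun this X
  intro Y hY
  obtain ⟨t, ht⟩ := Y.finite_real_spectrum.bddAbove
  set c := max t 0 / ε
  have hYt : Y ≤ algebraMap ℝ _ (max t 0) :=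
    le_algebraMap_of_spectrum_le (fun x hx => (ht hx).trans (le_max_left _ _)) hY.isSelfAdjoint
  have hle : p * Y * p ≤ c • ρ := calc
    p * Y * p ≤ p * algebraMap ℝ _ (max t 0) * p := conjugate_le_conjugate_of_nonneg hYt hp.nonneg
    _ = c • (ε • p) := by
      rw [Algebra.algebraMap_eq_smul_one, mul_smul_comm, mul_one, smul_mul_assoc,
        hp.isIdempotentElem.eq, smul_smul, div_mul_cancel₀ _ hε.ne']
    _ ≤ c • ρ := smul_le_smul_of_nonneg_left hερ (by positivity)
  refine (mul_mul_eq_self_of_le_smul hp hpρ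
    (Φ.map_nonneg (conjugate_nonneg_of_nonneg hY hp.nonneg)) (c := c) ?_).symm
  calc Φ (p * Y * p) ≤ Φ (c • ρ) := OrderHomClass.mono Φ hle
    _ = c • ρ := by rw [map_smul_of_tower, hρ.eq]

variable {Φ}

theorem IsIrreducible.posDef_of_isFixedPt (hΦ : Φ.IsIrreducible) {ρ : Matrix ι ι ℂ} (hρ : 0 ≤ ρ)
    (hρ0 : ρ ≠ 0) (hfix : IsFixedPt Φ ρ) : ρ.PosDef := by
  obtain ⟨p, hp, hpρ, ε, hε, hερ⟩ := exists_isStarProjection_smul_le hρ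
  rcases hΦ p hp (Φ.preservesCorner_of_smul_le hfix hp hpρ hε hερ) with rfl | rfl
  · exact absurd (by simpa using hpρ.symm) hρ0
  · simpa using (PosDef.one.smul hε).add_posSemidef (Matrix.le_iff.mp hερ)

theorem IsIrreducible.eq_trace_smul_of_isSelfAdjoint (hΦ : Φ.IsIrreducible)
    {π H : Matrix ι ι ℂ} (hπ : 0 ≤ π) (hπtr : π.trace = 1) (hπfix : IsFixedPt Φ π)
    (hH : IsSelfAdjoint H) (hHfix : IsFixedPt Φ H) : H = H.trace • π := by
  have : Nonempty ι := by
    by_contra h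
    simp [not_nonempty_iff.mp h] at hπtr
  have hπpd := hΦ.posDef_of_isFixedPt hπ (by rintro rfl; simp at hπtr) hπfix
  obtain ⟨c, hc, hcu⟩ := hπpd.exists_nonneg_sub_not_isUnit hH
  have hfix : IsFixedPt Φ (c • π - H) := by
    rw [IsFixedPt, map_sub, map_smul_of_tower, hπfix.eq, hHfix.eq]
  have hHc : H = (c : ℂ) • π := by
    by_contra h
    exact hcu (hΦ.posDef_of_isFixedPt hc (sub_ne_zero.mpr (by simpa [eq_comm] using h)) hfix).isUnit
  rw [hHc, trace_smul, hπtr, smul_eq_mul, mul_one]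

theorem IsIrreducible.eq_trace_smul_of_isFixedPt (hΦ : Φ.IsIrreducible) {π X : Matrix ι ι ℂ}
    (hπ : 0 ≤ π) (hπtr : π.trace = 1) (hπfix : IsFixedPt Φ π) (hX : IsFixedPt Φ X) :
    X = X.trace • π := by
  have hstar : IsFixedPt Φ (star X) := by rw [IsFixedPt, Φ.map_star, hX.eq]
  have hre : IsFixedPt Φ (ℜ X : Matrix ι ι ℂ) := by
    simp [IsFixedPt, realPart_apply_coe, map_smul_of_tower, hstar.eq, hX.eq]
  have him : IsFixedPt Φ (ℑ X : Matrix ι ι ℂ) := by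
    simp [IsFixedPt, imaginaryPart_apply_coe, map_smul_of_tower, hstar.eq, hX.eq]
  have hdec := realPart_add_I_smul_imaginaryPart X
  rw [hΦ.eq_trace_smul_of_isSelfAdjoint hπ hπtr hπfix (ℜ X).2 hre,
    hΦ.eq_trace_smul_of_isSelfAdjoint hπ hπtr hπfix (ℑ X).2 him] at hdec
  rw [← hdec]
  simp [trace_add, trace_smul, add_smul, smul_smul, hπtr]

end PositiveLinearMap

/-- For an irreducible, positive, trace preserving map `Φ` on `M_n(ℂ)` with
invariant state `π` and `Ω(X) = Tr(X)·π`, the map `I − Φ + Ω` is invertible. -/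
theorem fundamental_map_exists {n : ℕ}
    (Φ Ω : Matrix (Fin n) (Fin n) ℂ →ₗ[ℂ] Matrix (Fin n) (Fin n) ℂ)
    (π : Matrix (Fin n) (Fin n) ℂ)
    (hΦpos : ∀ X : Matrix (Fin n) (Fin n) ℂ, X.PosSemidef → (Φ X).PosSemidef)
    (hΦtr : ∀ X : Matrix (Fin n) (Fin n) ℂ, (Φ X).trace = X.trace)
    (hΦirr : ∀ p : Matrix (Fin n) (Fin n) ℂ, p.IsHermitian → p * p = p →
      (∀ X : Matrix (Fin n) (Fin n) ℂ, Φ (p * X * p) = p * Φ (p * X * p) * p) → p = 0 ∨ p = 1)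
    (hπpos : π.PosSemidef) (hπtr : π.trace = 1) (hπinv : Φ π = π)
    (hΩ : ∀ X : Matrix (Fin n) (Fin n) ℂ, Ω X = X.trace • π) :
    Function.Bijective ⇑(LinearMap.id - Φ + Ω :
      Matrix (Fin n) (Fin n) ℂ →ₗ[ℂ] Matrix (Fin n) (Fin n) ℂ) := by
  let Ψ : Matrix (Fin n) (Fin n) ℂ →ₚ[ℂ] Matrix (Fin n) (Fin n) ℂ :=
    .mk₀ Φ fun X hX => (hΦpos X hX.posSemidef).nonneg
  have hΨ : Ψ.IsIrreducible := fun p hp => hΦirr p hp.isSelfAdjoint hp.isIdempotentElem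
  refine IsArtinian.bijective_of_injective_endomorphism _
    ((injective_iff_map_eq_zero _).mpr fun X hX => ?_)
  simp only [LinearMap.add_apply, LinearMap.sub_apply, LinearMap.id_apply, hΩ] at hX
  have htr : X.trace = 0 := by simpa [hΦtr, hπtr] using congrArg trace hX
  have hfix : Function.IsFixedPt Ψ X := by
    rw [htr, zero_smul, add_zero, sub_eq_zero] at hX
    exact hX.symm
  rw [hΨ.eq_trace_smul_of_isFixedPt hπpos.nonneg hπtr hπinv hfix, htr, zero_smul]
end

section
/- Let Φ be an irreducible, positive, trace preserving linear map on M_n(ℂ), let Q ∈ M_n(ℂ) be an orthogonal projection with Q ≠ 0 and Q ≠ I_n, and define ℚ(X) = QXQ on M_n(ℂ). Then 1 is not an eigenvalue of the linear map ℚ∘Φ on M_n(ℂ); equivalently, the map I − ℚ∘Φ is invertible. -/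
/-!
Since `Q * Φ(·) * Q` commutes with `star`, it suffices to show that a self-adjoint fixed point `W`
vanishes. Write `W = W⁺ - W⁻` and let `P` be the support projection of `W⁺`. Then
`W⁺ = P W P = P C P - P D P` with `C = QΦ(W⁺)Q ≥ 0`, `D = QΦ(W⁻)Q ≥ 0`, and trace preservation
squeezes `tr W⁺ ≤ tr PCP ≤ tr C ≤ tr W⁺`; the equality cases give `W⁺ = C`, so `W⁺` (and likewise
`W⁻`) is a positive fixed point. A positive fixed point `A` satisfies `QA = A` and, again by
comparing traces, `Φ A = A`. The support projection `R` of `A` is then `Φ`-invariant, because every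
positive `B` in the corner `R M_n R` is dominated by a multiple of `A`, so `Φ B` is too. By
irreducibility `R = 0`, i.e. `A = 0`, or `R = 1`, which together with `QA = A` forces `Q = 1`.
-/

open Matrix ComplexOrder

open scoped MatrixOrder ComplexStarModule

namespace PositiveLinearMap

variable {A B : Type*} [NonUnitalRing A] [Module ℂ A] [SMulCommClass ℂ A A] [IsScalarTower ℂ A A]
  [StarRing A] [TopologicalSpace A] [StarModule ℂ A]
  [NonUnitalContinuousFunctionalCalculus ℝ A IsSelfAdjoint] [PartialOrder A] [StarOrderedRing A]
  [NonUnitalRing B] [StarRing B] [Module ℂ B] [StarModule ℂ B] [PartialOrder B] [StarOrderedRing B]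

lemma map_star_s5 (f : A →ₚ[ℂ] B) (x : A) : f (star x) = star (f x) := by
  have hx : x ∈ Submodule.span ℂ {a : A | 0 ≤ a} :=
    CStarAlgebra.span_nonneg (A := A) ▸ Submodule.mem_top
  induction hx using Submodule.span_induction with
  | mem a ha =>
    rw [(IsSelfAdjoint.of_nonneg ha).star_eq, (IsSelfAdjoint.of_nonneg (f.map_nonneg ha)).star_eq]
  | zero => simp
  | add a b _ _ ha hb => simp [ha, hb]
  | smul c a _ ha => simp [ha]

end PositiveLinearMap

lemma LinearMap.eq_zero_of_apply_eq_self_of_map_star {E : Type*} [AddCommGroup E] [Module ℂ E]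
    [StarAddMonoid E] [StarModule ℂ E] (T : E →ₗ[ℂ] E) (hT : ∀ x, T (star x) = star (T x))
    (hsa : ∀ x, IsSelfAdjoint x → T x = x → x = 0) {x : E} (hx : T x = x) : x = 0 := by
  have hx' : T (star x) = star x := by rw [hT, hx]
  have hre : T (ℜ x) = ℜ x := by
    rw [realPart_apply_coe, LinearMap.map_smul_of_tower, map_add, hx, hx']
  have him : T (ℑ x) = ℑ x := by
    rw [imaginaryPart_apply_coe, map_smul, LinearMap.map_smul_of_tower, map_sub, hx, hx']
  rw [← realPart_add_I_smul_imaginaryPart x, hsa _ (ℜ x).2 hre, hsa _ (ℑ x).2 him, smul_zero,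
    add_zero]

namespace Matrix

variable {n : Type*} [Fintype n] [DecidableEq n]

lemma trace_eq_trace_mul_mul_add_trace_mul_mul (A : Matrix n n ℂ) {P : Matrix n n ℂ}
    (hP : IsIdempotentElem P) :
    A.trace = (P * A * P).trace + ((1 - P) * A * (1 - P)).trace := by
  have hPAP : (P * A * P).trace = (A * P).trace := by
    rw [trace_mul_cycle, hP.eq, trace_mul_comm]
  have expand : (1 - P) * A * (1 - P) = A - P * A - A * P + P * A * P := by noncomm_ring
  rw [expand, trace_add, trace_sub, trace_sub, trace_mul_comm P A, hPAP]
  ring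

lemma trace_mul_mul_le {A P : Matrix n n ℂ} (hA : 0 ≤ A) (hP : IsStarProjection P) :
    (P * A * P).trace ≤ A.trace := by
  have hcompl : 0 ≤ (1 - P) * A * (1 - P) :=
    hP.one_sub.isSelfAdjoint.conjugate_nonneg hA
  rw [trace_eq_trace_mul_mul_add_trace_mul_mul A hP.isIdempotentElem]
  exact le_add_of_nonneg_right (hcompl.posSemidef.trace_nonneg)

lemma eq_mul_mul_of_mul_mul_one_sub_eq_zero {A P : Matrix n n ℂ} (hA : 0 ≤ A)
    (hP : IsSelfAdjoint P) (h : (1 - P) * A * (1 - P) = 0) : A = P * A * P := by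
  obtain ⟨B, rfl⟩ := CStarAlgebra.nonneg_iff_eq_star_mul_self.mp hA
  have hB : B * (1 - P) = 0 := by
    rw [← conjTranspose_mul_self_eq_zero, conjTranspose_mul, ← h, ← star_eq_conjTranspose,
      star_sub, star_one, hP.star_eq, star_eq_conjTranspose]
    noncomm_ring
  have hBP : B = B * P := by rwa [mul_sub, mul_one, sub_eq_zero] at hB
  conv_lhs => rw [hBP]
  rw [star_mul, hP.star_eq, mul_assoc, mul_assoc, mul_assoc]

lemma eq_mul_mul_of_trace_eq {A P : Matrix n n ℂ} (hA : 0 ≤ A) (hP : IsStarProjection P)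
    (h : (P * A * P).trace = A.trace) : A = P * A * P := by
  refine eq_mul_mul_of_mul_mul_one_sub_eq_zero hA hP.isSelfAdjoint ?_
  have hcompl : 0 ≤ (1 - P) * A * (1 - P) := hP.one_sub.isSelfAdjoint.conjugate_nonneg hA
  have htr := trace_eq_trace_mul_mul_add_trace_mul_mul A hP.isIdempotentElem
  rw [h] at htr
  exact hcompl.posSemidef.trace_eq_zero_iff.mp (left_eq_add.mp htr)

lemma eq_of_eq_mul_sub_mul_of_trace_le {C D P E : Matrix n n ℂ} (hC : 0 ≤ C) (hD : 0 ≤ D)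
    (hP : IsStarProjection P) (hE : E = P * (C - D) * P) (htr : C.trace ≤ E.trace) : E = C := by
  have hEtr : E.trace = (P * C * P).trace - (P * D * P).trace := by
    rw [hE, mul_sub, sub_mul, trace_sub]
  have hPDP : 0 ≤ P * D * P := hP.isSelfAdjoint.conjugate_nonneg hD
  have hCE : (P * C * P).trace ≤ E.trace := htr.trans' (trace_mul_mul_le hC hP)
  have hEC : E.trace ≤ (P * C * P).trace := hEtr ▸ sub_le_self _ hPDP.posSemidef.trace_nonneg
  have hC_eq : C = P * C * P :=
    eq_mul_mul_of_trace_eq hC hP (le_antisymm (trace_mul_mul_le hC hP) (htr.trans hEC))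
  have hD_eq : P * D * P = 0 :=
    hPDP.posSemidef.trace_eq_zero_iff.mp (sub_eq_self.mp (le_antisymm hEC hCE ▸ hEtr).symm)
  rw [hE, mul_sub, sub_mul, hD_eq, sub_zero, ← hC_eq]

noncomputable def supportProjection (A : Matrix n n ℂ) : Matrix n n ℂ :=
  cfc (fun x : ℝ => if x = 0 then 0 else 1) A

variable {A : Matrix n n ℂ}

lemma isStarProjection_supportProjection (A : Matrix n n ℂ) :
    IsStarProjection (supportProjection A) := by
  refine ⟨?_, cfc_predicate _ A⟩
  rw [IsIdempotentElem, supportProjection, ← cfc_mul _ _ A (A.finite_real_spectrum.continuousOn _)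
    (A.finite_real_spectrum.continuousOn _)]
  congr! 2 with x
  split_ifs <;> simp

lemma supportProjection_mul_eq_self (hA : IsSelfAdjoint A) : supportProjection A * A = A := by
  calc supportProjection A * A = cfc (fun x : ℝ => (if x = 0 then 0 else 1) * x) A := by
        rw [cfc_mul _ _ A (A.finite_real_spectrum.continuousOn _), cfc_id' ℝ A, supportProjection]
    _ = cfc id A := cfc_congr fun x _ => by split_ifs with hx <;> simp [hx]
    _ = A := cfc_id ℝ A

lemma mul_supportProjection_eq_self (hA : IsSelfAdjoint A) : A * supportProjection A = A := by
  simpa only [star_mul, hA.star_eq, (isStarProjection_supportProjection A).isSelfAdjoint.star_eq]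
    using congrArg star (supportProjection_mul_eq_self hA)

lemma supportProjection_eq_mul_cfc_inv (hA : IsSelfAdjoint A) :
    supportProjection A = A * cfc (·⁻¹ : ℝ → ℝ) A := by
  -- `x * x⁻¹` is the indicator of `x ≠ 0` because `(0 : ℝ)⁻¹ = 0`
  calc supportProjection A = cfc (fun x : ℝ => x * x⁻¹) A :=
        cfc_congr fun x _ => by split_ifs with hx <;> simp [hx]
    _ = A * cfc (·⁻¹ : ℝ → ℝ) A := by
        rw [cfc_mul _ _ A (by fun_prop) (A.finite_real_spectrum.continuousOn _), cfc_id' ℝ A]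

lemma mul_supportProjection_eq_of_mul_eq (hA : IsSelfAdjoint A) {B C : Matrix n n ℂ}
    (h : B * A = C * A) : B * supportProjection A = C * supportProjection A := by
  rw [supportProjection_eq_mul_cfc_inv hA, ← mul_assoc, h, mul_assoc]

lemma exists_supportProjection_le_smul (hA : 0 ≤ A) : ∃ t : ℝ, supportProjection A ≤ t • A := by
  have hspec := A.finite_real_spectrum
  have hnonneg := (StarOrderedRing.nonneg_iff_spectrum_nonneg (R := ℝ) A).mp hA
  refine ⟨∑ x ∈ hspec.toFinset, x⁻¹, ?_⟩
  rw [← cfc_const_mul_id _ A, supportProjection]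
  refine cfc_mono (fun x hx => ?_) (hspec.continuousOn _) (hspec.continuousOn _)
  split_ifs with hx0
  · simp [hx0]
  · have hle : x⁻¹ ≤ ∑ y ∈ hspec.toFinset, y⁻¹ :=
      Finset.single_le_sum (fun y hy => inv_nonneg.mpr (hnonneg y (hspec.mem_toFinset.mp hy)))
        (hspec.mem_toFinset.mpr hx)
    calc (1 : ℝ) = x⁻¹ * x := (inv_mul_cancel₀ hx0).symm
      _ ≤ _ := mul_le_mul_of_nonneg_right hle (hnonneg x hx)

open scoped Matrix.Norms.L2Operator in
lemma map_mul_mul_supportProjection_of_map_eq_self (Φ : Matrix n n ℂ →ₚ[ℂ] Matrix n n ℂ)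
    (hA : 0 ≤ A) (hΦA : Φ A = A) (X : Matrix n n ℂ) :
    Φ (supportProjection A * X * supportProjection A) =
      supportProjection A * Φ (supportProjection A * X * supportProjection A) *
        supportProjection A := by
  set R := supportProjection A
  have hR := isStarProjection_supportProjection A
  have hRA : (1 - R) * A = 0 := by
    rw [sub_mul, one_mul, supportProjection_mul_eq_self (IsSelfAdjoint.of_nonneg hA), sub_self]
  obtain ⟨t, hRt⟩ := exists_supportProjection_le_smul hA
  have hX : X ∈ Submodule.span ℂ {B : Matrix n n ℂ | 0 ≤ B} :=
    CStarAlgebra.span_nonneg (A := Matrix n n ℂ) ▸ Submodule.mem_top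
  induction hX using Submodule.span_induction with
  | mem X hX =>
    have hRXR : 0 ≤ R * X * R := hR.isSelfAdjoint.conjugate_nonneg hX
    have hXnorm : X ≤ ‖X‖ • (1 : Matrix n n ℂ) := by
      simpa only [Algebra.algebraMap_eq_smul_one] using
        (IsSelfAdjoint.of_nonneg hX).le_algebraMap_norm_self
    have hle : R * X * R ≤ (‖X‖ * t) • A := calc
      R * X * R ≤ R * (‖X‖ • (1 : Matrix n n ℂ)) * R :=
        hR.isSelfAdjoint.conjugate_le_conjugate hXnorm
      _ = ‖X‖ • R := by rw [mul_smul_comm, mul_one, smul_mul_assoc, hR.isIdempotentElem.eq]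
      _ ≤ ‖X‖ • t • A := smul_le_smul_of_nonneg_left hRt (norm_nonneg X)
      _ = (‖X‖ * t) • A := smul_smul _ _ _
    have hΦle : Φ (R * X * R) ≤ (‖X‖ * t) • A := by
      simpa only [PositiveLinearMap.map_smul_of_tower, hΦA] using OrderHomClass.mono Φ hle
    have hcorner : (1 - R) * Φ (R * X * R) * (1 - R) = 0 := by
      refine le_antisymm ?_ (hR.one_sub.isSelfAdjoint.conjugate_nonneg (Φ.map_nonneg hRXR))
      calc (1 - R) * Φ (R * X * R) * (1 - R) ≤ (1 - R) * ((‖X‖ * t) • A) * (1 - R) :=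
            hR.one_sub.isSelfAdjoint.conjugate_le_conjugate hΦle
        _ = 0 := by rw [mul_smul_comm, hRA, smul_zero, zero_mul]
    exact eq_mul_mul_of_mul_mul_one_sub_eq_zero (Φ.map_nonneg hRXR) hR.isSelfAdjoint hcorner
  | zero => simp
  | add X Y _ _ hX hY => rw [mul_add, add_mul, map_add, mul_add, add_mul, ← hX, ← hY]
  | smul c X _ hX =>
    rw [mul_smul_comm, smul_mul_assoc, map_smul, mul_smul_comm, smul_mul_assoc, ← hX]

section FixedPoints

open Function

variable {Φ : Matrix n n ℂ →ₚ[ℂ] Matrix n n ℂ} {Q : Matrix n n ℂ}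

lemma isFixedPt_posPart (hΦtr : ∀ X, (Φ X).trace = X.trace) (hQ : IsStarProjection Q)
    {W : Matrix n n ℂ} (hW : IsSelfAdjoint W) (hfix : IsFixedPt (fun X => Q * Φ X * Q) W) :
    IsFixedPt (fun X => Q * Φ X * Q) W⁺ := by
  set P := supportProjection W⁺
  have hP := isStarProjection_supportProjection W⁺
  have hWpos : IsSelfAdjoint W⁺ := IsSelfAdjoint.of_nonneg (CFC.posPart_nonneg W)
  have hPWposP : P * W⁺ * P = W⁺ := by
    rw [supportProjection_mul_eq_self hWpos, mul_supportProjection_eq_self hWpos]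
  have hPWnegP : P * W⁻ * P = 0 := by
    rw [mul_assoc, mul_supportProjection_eq_of_mul_eq hWpos (B := W⁻) (C := 0)
      (by rw [CFC.negPart_mul_posPart, zero_mul]), zero_mul, mul_zero]
  have hE : W⁺ = P * (Q * Φ W⁺ * Q - Q * Φ W⁻ * Q) * P := calc
    W⁺ = P * (W⁺ - W⁻) * P := by rw [mul_sub, sub_mul, hPWposP, hPWnegP, sub_zero]
    _ = P * (Q * Φ (W⁺ - W⁻) * Q) * P := by rw [CFC.posPart_sub_negPart W hW, hfix.eq]
    _ = P * (Q * Φ W⁺ * Q - Q * Φ W⁻ * Q) * P := by rw [map_sub, mul_sub, sub_mul]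
  refine (eq_of_eq_mul_sub_mul_of_trace_le ?_ ?_ hP hE ?_).symm
  · exact hQ.isSelfAdjoint.conjugate_nonneg (Φ.map_nonneg (CFC.posPart_nonneg W))
  · exact hQ.isSelfAdjoint.conjugate_nonneg (Φ.map_nonneg (CFC.negPart_nonneg W))
  · exact (trace_mul_mul_le (Φ.map_nonneg (CFC.posPart_nonneg W)) hQ).trans_eq (hΦtr _)

lemma eq_zero_of_nonneg_of_isFixedPt (hΦtr : ∀ X, (Φ X).trace = X.trace)
    (hΦirr : ∀ P, IsStarProjection P → (∀ X, Φ (P * X * P) = P * Φ (P * X * P) * P) →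
      P = 0 ∨ P = 1)
    (hQ : IsStarProjection Q) (hQ1 : Q ≠ 1) {A : Matrix n n ℂ} (hA : 0 ≤ A)
    (hfix : IsFixedPt (fun X => Q * Φ X * Q) A) : A = 0 := by
  have hfix' : Q * Φ A * Q = A := hfix
  have hQA : Q * A = A := by
    rw [← hfix', ← mul_assoc, ← mul_assoc, hQ.isIdempotentElem.eq]
  have hΦA : Φ A = A := by
    have := eq_mul_mul_of_trace_eq (Φ.map_nonneg hA) hQ (by rw [hfix', hΦtr])
    rwa [hfix'] at this
  have hA' := IsSelfAdjoint.of_nonneg hA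
  rcases hΦirr _ (isStarProjection_supportProjection A)
    (map_mul_mul_supportProjection_of_map_eq_self Φ hA hΦA) with hR | hR
  · rw [← supportProjection_mul_eq_self hA', hR, zero_mul]
  · refine absurd ?_ hQ1
    simpa only [hR, mul_one] using mul_supportProjection_eq_of_mul_eq hA' (hQA.trans (one_mul A).symm)

lemma eq_zero_of_isSelfAdjoint_of_isFixedPt (hΦtr : ∀ X, (Φ X).trace = X.trace)
    (hΦirr : ∀ P, IsStarProjection P → (∀ X, Φ (P * X * P) = P * Φ (P * X * P) * P) →
      P = 0 ∨ P = 1)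
    (hQ : IsStarProjection Q) (hQ1 : Q ≠ 1) {W : Matrix n n ℂ} (hW : IsSelfAdjoint W)
    (hfix : IsFixedPt (fun X => Q * Φ X * Q) W) : W = 0 := by
  have hfix_neg : IsFixedPt (fun X => Q * Φ X * Q) (-W) := by
    simp only [IsFixedPt, map_neg, mul_neg, neg_mul, hfix.eq]
  rw [← CFC.posPart_sub_negPart W hW, ← CFC.posPart_neg,
    eq_zero_of_nonneg_of_isFixedPt hΦtr hΦirr hQ hQ1 (CFC.posPart_nonneg W)
      (isFixedPt_posPart hΦtr hQ hW hfix),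
    eq_zero_of_nonneg_of_isFixedPt hΦtr hΦirr hQ hQ1 (CFC.posPart_nonneg (-W))
      (isFixedPt_posPart hΦtr hQ hW.neg hfix_neg), sub_zero]

end FixedPoints

end Matrix

theorem one_not_eigenvalue_QPhi_general {n : ℕ}
    (Φ QQ : Matrix (Fin n) (Fin n) ℂ →ₗ[ℂ] Matrix (Fin n) (Fin n) ℂ)
    (Q : Matrix (Fin n) (Fin n) ℂ)
    (hΦpos : ∀ X : Matrix (Fin n) (Fin n) ℂ, X.PosSemidef → (Φ X).PosSemidef)
    (hΦtr : ∀ X : Matrix (Fin n) (Fin n) ℂ, (Φ X).trace = X.trace)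
    (hΦirr : ∀ p : Matrix (Fin n) (Fin n) ℂ, p.IsHermitian → p * p = p →
      (∀ X : Matrix (Fin n) (Fin n) ℂ, Φ (p * X * p) = p * Φ (p * X * p) * p) → p = 0 ∨ p = 1)
    (hQherm : Q.IsHermitian) (hQidem : Q * Q = Q) (hQne1 : Q ≠ 1)
    (hQQ : ∀ X : Matrix (Fin n) (Fin n) ℂ, QQ X = Q * X * Q) :
    (∀ X : Matrix (Fin n) (Fin n) ℂ, QQ (Φ X) = X → X = 0) ∧
      Function.Bijective ⇑(LinearMap.id - QQ ∘ₗ Φ :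
        Matrix (Fin n) (Fin n) ℂ →ₗ[ℂ] Matrix (Fin n) (Fin n) ℂ) := by
  let Ψ : Matrix (Fin n) (Fin n) ℂ →ₚ[ℂ] Matrix (Fin n) (Fin n) ℂ :=
    PositiveLinearMap.mk₀ Φ fun X hX => (hΦpos X hX.posSemidef).nonneg
  have hQ : IsStarProjection Q := ⟨hQidem, hQherm⟩
  have hfix : ∀ X, QQ (Φ X) = X → X = 0 := by
    refine fun X => (QQ ∘ₗ Φ).eq_zero_of_apply_eq_self_of_map_star (fun Y => ?_)
      (fun W hW hWfix => ?_)
    · simp only [LinearMap.comp_apply, hQQ, star_mul, hQ.isSelfAdjoint.star_eq, ← mul_assoc]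
      exact congrArg (Q * · * Q) (Ψ.map_star_s5 Y)
    · exact eq_zero_of_isSelfAdjoint_of_isFixedPt (Φ := Ψ) hΦtr
        (fun P hP => hΦirr P hP.isSelfAdjoint hP.isIdempotentElem) hQ hQne1 hW
        (by simpa only [LinearMap.comp_apply, hQQ] using hWfix : Q * Φ W * Q = W)
  refine ⟨hfix, ?_⟩
  have hinj : Function.Injective ⇑(LinearMap.id - QQ ∘ₗ Φ : Matrix (Fin n) (Fin n) ℂ →ₗ[ℂ] _) :=
    (injective_iff_map_eq_zero _).mpr fun X hX => hfix X (sub_eq_zero.mp hX).symm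
  exact ⟨hinj, LinearMap.injective_iff_surjective.mp hinj⟩

/-- For an irreducible, positive, trace preserving map `Φ` on `M_n(ℂ)` and a
nontrivial orthogonal projection `Q`, with `ℚ(X) = QXQ`, `1` is not an eigenvalue of `ℚ∘Φ`;
equivalently, `I − ℚ∘Φ` is invertible. -/
theorem one_not_eigenvalue_QPhi {n : ℕ}
    (Φ QQ : Matrix (Fin n) (Fin n) ℂ →ₗ[ℂ] Matrix (Fin n) (Fin n) ℂ)
    (Q : Matrix (Fin n) (Fin n) ℂ)
    (hΦpos : ∀ X : Matrix (Fin n) (Fin n) ℂ, X.PosSemidef → (Φ X).PosSemidef)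
    (hΦtr : ∀ X : Matrix (Fin n) (Fin n) ℂ, (Φ X).trace = X.trace)
    (hΦirr : ∀ p : Matrix (Fin n) (Fin n) ℂ, p.IsHermitian → p * p = p →
      (∀ X : Matrix (Fin n) (Fin n) ℂ, Φ (p * X * p) = p * Φ (p * X * p) * p) → p = 0 ∨ p = 1)
    (hQherm : Q.IsHermitian) (hQidem : Q * Q = Q) (hQne0 : Q ≠ 0) (hQne1 : Q ≠ 1)
    (hQQ : ∀ X : Matrix (Fin n) (Fin n) ℂ, QQ X = Q * X * Q) :
    (∀ X : Matrix (Fin n) (Fin n) ℂ, QQ (Φ X) = X → X = 0) ∧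
      Function.Bijective ⇑(LinearMap.id - QQ ∘ₗ Φ :
        Matrix (Fin n) (Fin n) ℂ →ₗ[ℂ] Matrix (Fin n) (Fin n) ℂ) :=
  one_not_eigenvalue_QPhi_general Φ QQ Q hΦpos hΦtr hΦirr hQherm hQidem hQne1 hQQ
end

section
/- Let Φ be an irreducible, positive, trace preserving linear map on M_n(ℂ), Q ∈ M_n(ℂ) an orthogonal projection with Q ≠ 0 and Q ≠ I_n, ℚ(X) = QXQ, and H = Φ∘(I − ℚ∘Φ)⁻¹. Then the map (I − ℚ)∘H is trace preserving: Tr(H(ρ)) − Tr(ℚ(H(ρ))) = Tr(ρ) for all ρ ∈ M_n(ℂ). -/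
open Matrix ComplexOrder

/-- With `H = Φ∘(I − ℚ∘Φ)⁻¹` (here `R = (I − ℚ∘Φ)⁻¹`, so `H = Φ∘R`), the map
`(I − ℚ)∘H` is trace preserving: `Tr(H(ρ)) − Tr(ℚ(H(ρ))) = Tr(ρ)` for all `ρ`. -/
theorem hitting_probability_map_trace_preserving {n : ℕ}
    (Φ QQ R : Matrix (Fin n) (Fin n) ℂ →ₗ[ℂ] Matrix (Fin n) (Fin n) ℂ)
    (Q : Matrix (Fin n) (Fin n) ℂ)
    (hΦpos : ∀ X : Matrix (Fin n) (Fin n) ℂ, X.PosSemidef → (Φ X).PosSemidef)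
    (hΦtr : ∀ X : Matrix (Fin n) (Fin n) ℂ, (Φ X).trace = X.trace)
    (hΦirr : ∀ p : Matrix (Fin n) (Fin n) ℂ, p.IsHermitian → p * p = p →
      (∀ X : Matrix (Fin n) (Fin n) ℂ, Φ (p * X * p) = p * Φ (p * X * p) * p) → p = 0 ∨ p = 1)
    (hQherm : Q.IsHermitian) (hQidem : Q * Q = Q) (hQne0 : Q ≠ 0) (hQne1 : Q ≠ 1)
    (hQQ : ∀ X : Matrix (Fin n) (Fin n) ℂ, QQ X = Q * X * Q)
    (hR1 : R ∘ₗ (LinearMap.id - QQ ∘ₗ Φ) = LinearMap.id)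
    (hR2 : (LinearMap.id - QQ ∘ₗ Φ) ∘ₗ R = LinearMap.id) :
    ∀ ρ : Matrix (Fin n) (Fin n) ℂ,
      (Φ (R ρ)).trace - (QQ (Φ (R ρ))).trace = ρ.trace := by
  intro ρ
  have h := congrArg (fun f => f ρ) hR2
  simp only [LinearMap.comp_apply, LinearMap.sub_apply, LinearMap.id_apply,
    LinearMap.id_coe, id_eq] at h
  have htr := congrArg Matrix.trace h
  rw [Matrix.trace_sub] at htr
  rw [hΦtr (R ρ), htr]
end

section
/- Let Φ be an irreducible, positive, trace preserving linear map on M_n(ℂ), Q ∈ M_n(ℂ) an orthogonal projection with Q ≠ 0 and Q ≠ I_n, P = I_n − Q, ℙ(X) = PXP, ℚ(X) = QXQ, and H = Φ∘(I − ℚ∘Φ)⁻¹. Then for every unit vector φ ∈ ℂⁿ with ρ_φ = φφ*, the series τ(φ→V) = Σ_{r≥1} r·Tr(ℙ(Φ((ℚ∘Φ)^{r−1}(ρ_φ)))) converges and τ(φ→V) = Tr(((I − ℚ∘Φ)⁻¹)(ρ_φ)) = Tr(H(ρ_φ)). -/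
/-!
Write `T = ℚ ∘ Φ` and `t r = Tr (T ^ r ρ)`. Trace preservation gives
`Tr ℙ(Φ X) = Tr X - Tr (T X)`, so the `r`-th term of the series is `(r + 1) (t r - t (r + 1))`,
and positivity makes `t` a nonnegative antitone sequence. From `R (I - T) = I` the partial sums
`∑_{r<N} t r` equal `Tr (R ρ) - Tr (R (T ^ N ρ))`; since `|Tr (R Y)| ≤ C Tr Y` for positive `Y`,
they are bounded, so `t` is summable with sum `Tr (R ρ)`. Summation by parts,
`∑_{r<N} (r + 1) (t r - t (r + 1)) = ∑_{r<N} t r - N t N`, and `N t N → 0` finish the proof.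
-/

open Matrix ComplexOrder Filter Topology Finset

theorem Antitone.tendsto_natCast_mul_of_summable {t : ℕ → ℝ} (ht : Antitone t)
    (hs : Summable t) : Tendsto (fun N : ℕ => (N : ℝ) * t N) atTop (𝓝 0) := by
  have hnonneg : ∀ r, 0 ≤ t r := ht.le_of_tendsto hs.tendsto_atTop_zero
  -- `(N - N / 2) t N` is at most the block sum of `t` over `[N / 2, N)`, a difference of two
  -- partial sums converging to the same limit.
  have hblock : Tendsto (fun N => ∑ r ∈ Ico (N / 2) N, t r) atTop (𝓝 0) := by
    have h := hs.tendsto_sum_tsum_nat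
    simpa [sum_Ico_eq_sub _ (Nat.div_le_self _ _)] using
      h.sub (h.comp (Nat.tendsto_div_const_atTop two_ne_zero))
  refine squeeze_zero (fun N => mul_nonneg N.cast_nonneg (hnonneg N)) (fun N => ?_)
    (by simpa using hblock.const_mul 2)
  calc (N : ℝ) * t N ≤ 2 * (((N - N / 2 : ℕ) : ℝ) * t N) := by
        rw [← mul_assoc]
        gcongr
        · exact hnonneg N
        · exact_mod_cast (by omega : N ≤ 2 * (N - N / 2))
    _ = 2 * ∑ _r ∈ Ico (N / 2) N, t N := by rw [sum_const, Nat.card_Ico, nsmul_eq_mul]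
    _ ≤ 2 * ∑ r ∈ Ico (N / 2) N, t r := by
        gcongr with r hr
        exact ht (mem_Ico.1 hr).2.le

theorem Antitone.hasSum_succ_mul_sub {t : ℕ → ℝ} (ht : Antitone t) (hs : Summable t) :
    HasSum (fun r : ℕ => ((r : ℝ) + 1) * (t r - t (r + 1))) (∑' r, t r) := by
  have hpartial (N : ℕ) :
      ∑ r ∈ range N, ((r : ℝ) + 1) * (t r - t (r + 1)) =
        ∑ r ∈ range N, t r - N * t N := by
    induction N with
    | zero => simp
    | succ N ih => rw [sum_range_succ, sum_range_succ, ih]; push_cast; ring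
  rw [hasSum_iff_tendsto_nat_of_nonneg fun r =>
    mul_nonneg (by positivity) (sub_nonneg.2 (ht r.le_succ))]
  simpa [hpartial] using hs.tendsto_sum_tsum_nat.sub (ht.tendsto_natCast_mul_of_summable hs)

theorem geom_sum_eq_of_mul_one_sub_eq_one {A : Type*} [Ring A] {R T : A} (h : R * (1 - T) = 1)
    (N : ℕ) : ∑ i ∈ range N, T ^ i = R - R * T ^ N :=
  calc ∑ i ∈ range N, T ^ i = R * (1 - T) * ∑ i ∈ range N, T ^ i := by rw [h, one_mul]
    _ = R - R * T ^ N := by rw [mul_assoc, mul_neg_geom_sum, mul_sub, mul_one]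

theorem Matrix.trace_one_sub_mul_mul_one_sub {m R : Type*} [Fintype m] [DecidableEq m]
    [CommRing R] {Q : Matrix m m R} (hQ : Q * Q = Q) (Z : Matrix m m R) :
    ((1 - Q) * Z * (1 - Q)).trace = Z.trace - (Q * Z * Q).trace := by
  have hQ' : (1 - Q) * (1 - Q) = 1 - Q := by simp [sub_mul, mul_sub, hQ]
  rw [trace_mul_cycle, hQ', sub_mul, one_mul, trace_sub, trace_mul_cycle, hQ]

theorem Matrix.PosSemidef.ofReal_re_trace {m : Type*} [Fintype m] {Y : Matrix m m ℂ}
    (hY : Y.PosSemidef) : (Y.trace.re : ℂ) = Y.trace :=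
  (Complex.eq_re_of_ofReal_le (by rw [Complex.ofReal_zero]; exact hY.trace_nonneg)).symm

section Frobenius

attribute [local instance] Matrix.frobeniusSeminormedAddCommGroup Matrix.frobeniusNormedSpace

open scoped MatrixOrder

theorem Matrix.PosSemidef.frobenius_norm_le_re_trace {m : Type*} [Fintype m] [DecidableEq m]
    {Y : Matrix m m ℂ} (hY : Y.PosSemidef) : ‖Y‖ ≤ Y.trace.re := by
  -- `Y = B* B`, and the Frobenius norm is submultiplicative with `‖B‖² = Tr (B* B)`.
  obtain ⟨B, rfl⟩ := CStarAlgebra.nonneg_iff_eq_star_mul_self.mp hY.nonneg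
  have hB : ‖B‖ ^ 2 = (star B * B).trace.re := by
    rw [frobenius_norm_def, ← Real.sqrt_eq_rpow, Real.sq_sqrt (by positivity), Finset.sum_comm]
    simp [Matrix.trace, Matrix.mul_apply, Complex.re_sum, Complex.conj_mul', ← Complex.ofReal_pow,
      Complex.ofReal_re]
  calc ‖star B * B‖ ≤ ‖star B‖ * ‖B‖ := frobenius_norm_mul _ _
    _ = (star B * B).trace.re := by
      rw [star_eq_conjTranspose, frobenius_norm_conjTranspose, ← sq, hB, star_eq_conjTranspose]

theorem LinearMap.exists_norm_le_mul_re_trace_of_posSemidef {m : Type*} [Fintype m]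
    (f : Matrix m m ℂ →ₗ[ℂ] ℂ) :
    ∃ C, 0 ≤ C ∧ ∀ Y : Matrix m m ℂ, Y.PosSemidef → ‖f Y‖ ≤ C * Y.trace.re := by
  classical
  obtain ⟨C, hC, hf⟩ := (LinearMap.toContinuousLinearMap f).bound
  exact ⟨C, hC.le, fun Y hY => (hf Y).trans (by gcongr; exact hY.frobenius_norm_le_re_trace)⟩

end Frobenius

section TraceNonincreasing

variable {m : Type*} {T : Module.End ℂ (Matrix m m ℂ)} {Y : Matrix m m ℂ}

theorem posSemidef_pow_apply (hpos : ∀ X, X.PosSemidef → (T X).PosSemidef)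
    (hY : Y.PosSemidef) (r : ℕ) : ((T ^ r) Y).PosSemidef := by
  induction r with
  | zero => simpa using hY
  | succ r ih => rw [pow_succ', Module.End.mul_apply]; exact hpos _ ih

theorem antitone_re_trace_pow_apply [Fintype m] (hpos : ∀ X, X.PosSemidef → (T X).PosSemidef)
    (htr : ∀ X, X.PosSemidef → (T X).trace.re ≤ X.trace.re) (hY : Y.PosSemidef) :
    Antitone fun r => ((T ^ r) Y).trace.re :=
  antitone_nat_of_succ_le fun r => by
    rw [pow_succ', Module.End.mul_apply]
    exact htr _ (posSemidef_pow_apply hpos hY r)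

theorem summable_re_trace_pow_apply_and_tsum_eq [Fintype m]
    (hpos : ∀ X, X.PosSemidef → (T X).PosSemidef)
    (htr : ∀ X, X.PosSemidef → (T X).trace.re ≤ X.trace.re) {R : Module.End ℂ (Matrix m m ℂ)}
    (hR : R * (1 - T) = 1) (hY : Y.PosSemidef) :
    Summable (fun r => ((T ^ r) Y).trace.re) ∧
      ((∑' r, ((T ^ r) Y).trace.re : ℝ) : ℂ) = (R Y).trace := by
  set t := fun r => ((T ^ r) Y).trace.re
  have hpsd := posSemidef_pow_apply hpos hY
  have hpartial (N : ℕ) :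
      ∑ r ∈ range N, ((T ^ r) Y).trace = (R Y).trace - (R ((T ^ N) Y)).trace := by
    rw [← trace_sum, ← LinearMap.sum_apply, geom_sum_eq_of_mul_one_sub_eq_one hR,
      LinearMap.sub_apply, Module.End.mul_apply, trace_sub]
  obtain ⟨C, hC, hbound⟩ :=
    ((traceLinearMap m ℂ ℂ) ∘ₗ R).exists_norm_le_mul_re_trace_of_posSemidef
  have hRT (N : ℕ) : ‖(R ((T ^ N) Y)).trace‖ ≤ C * t N := hbound _ (hpsd N)
  have hsumm : Summable t := by
    refine summable_of_sum_range_le (c := ‖(R Y).trace‖ + C * t 0)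
      (fun r => by simpa using (Complex.le_def.mp (hpsd r).trace_nonneg).1) fun N => ?_
    calc ∑ r ∈ range N, t r = ((R Y).trace - (R ((T ^ N) Y)).trace).re := by
          rw [← hpartial, Complex.re_sum]
      _ ≤ ‖(R Y).trace‖ + C * t N :=
          (Complex.re_le_norm _).trans ((norm_sub_le _ _).trans (by gcongr; exact hRT N))
      _ ≤ ‖(R Y).trace‖ + C * t 0 := by
          gcongr
          exact antitone_re_trace_pow_apply hpos htr hY (Nat.zero_le N)
  refine ⟨hsumm,
    tendsto_nhds_unique (Complex.hasSum_ofReal.mpr hsumm.hasSum).tendsto_sum_nat ?_⟩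
  have hcast (r : ℕ) : (t r : ℂ) = ((T ^ r) Y).trace := (hpsd r).ofReal_re_trace
  have hRT0 : Tendsto (fun N => (R ((T ^ N) Y)).trace) atTop (𝓝 0) :=
    squeeze_zero_norm hRT (by simpa using hsumm.tendsto_atTop_zero.const_mul C)
  simpa only [hcast, hpartial, sub_zero] using tendsto_const_nhds.sub hRT0

end TraceNonincreasing

theorem mean_hitting_time_eq_trace_general {n : ℕ}
    (Φ PP QQ R : Matrix (Fin n) (Fin n) ℂ →ₗ[ℂ] Matrix (Fin n) (Fin n) ℂ)
    (Q : Matrix (Fin n) (Fin n) ℂ)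
    (hΦpos : ∀ X : Matrix (Fin n) (Fin n) ℂ, X.PosSemidef → (Φ X).PosSemidef)
    (hΦtr : ∀ X : Matrix (Fin n) (Fin n) ℂ, (Φ X).trace = X.trace)
    (hQherm : Q.IsHermitian) (hQidem : Q * Q = Q)
    (hPP : ∀ X : Matrix (Fin n) (Fin n) ℂ, PP X = (1 - Q) * X * (1 - Q))
    (hQQ : ∀ X : Matrix (Fin n) (Fin n) ℂ, QQ X = Q * X * Q)
    (hR1 : R ∘ₗ (LinearMap.id - QQ ∘ₗ Φ) = LinearMap.id)
    (φ : Fin n → ℂ) :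
    HasSum (fun r : ℕ => ((r : ℂ) + 1) *
        (PP (Φ (((QQ ∘ₗ Φ) ^ r) (Matrix.vecMulVec φ (star φ))))).trace)
      ((R (Matrix.vecMulVec φ (star φ))).trace) ∧
    (R (Matrix.vecMulVec φ (star φ))).trace = (Φ (R (Matrix.vecMulVec φ (star φ)))).trace := by
  refine ⟨?_, (hΦtr _).symm⟩
  set T := QQ ∘ₗ Φ
  have hTpos (X : Matrix (Fin n) (Fin n) ℂ) (hX : X.PosSemidef) : (T X).PosSemidef := by
    simpa [T, hQQ, hQherm.eq] using (hΦpos X hX).mul_mul_conjTranspose_same Q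
  have hdefect (X : Matrix (Fin n) (Fin n) ℂ) : (PP (Φ X)).trace = X.trace - (T X).trace := by
    rw [hPP, trace_one_sub_mul_mul_one_sub hQidem, hΦtr, ← hQQ]
    rfl
  have hTtr (X : Matrix (Fin n) (Fin n) ℂ) (hX : X.PosSemidef) :
      (T X).trace.re ≤ X.trace.re := by
    have h := ((hΦpos X hX).mul_mul_conjTranspose_same (1 - Q)).trace_nonneg
    rw [conjTranspose_sub, conjTranspose_one, hQherm.eq, ← hPP, hdefect] at h
    simpa using (Complex.le_def.mp h).1
  have hρ := posSemidef_vecMulVec_self_star φ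
  obtain ⟨hsumm, htsum⟩ := summable_re_trace_pow_apply_and_tsum_eq hTpos hTtr hR1 hρ
  have h := Complex.hasSum_ofReal.mpr
    ((antitone_re_trace_pow_apply hTpos hTtr hρ).hasSum_succ_mul_sub hsumm)
  rw [htsum] at h
  refine h.congr_fun fun r => ?_
  rw [hdefect, ← Module.End.mul_apply, ← pow_succ']
  push_cast [(posSemidef_pow_apply hTpos hρ _).ofReal_re_trace]
  rfl

/-- With `R = (I − ℚ∘Φ)⁻¹` and `H = Φ∘R`, the mean hitting time series
`Σ_{r≥1} r·Tr(ℙ(Φ((ℚ∘Φ)^{r−1}(ρ_φ))))` converges to `Tr(R(ρ_φ))`, which equals `Tr(H(ρ_φ))`. -/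
theorem mean_hitting_time_eq_trace {n : ℕ}
    (Φ PP QQ R : Matrix (Fin n) (Fin n) ℂ →ₗ[ℂ] Matrix (Fin n) (Fin n) ℂ)
    (Q : Matrix (Fin n) (Fin n) ℂ)
    (hΦpos : ∀ X : Matrix (Fin n) (Fin n) ℂ, X.PosSemidef → (Φ X).PosSemidef)
    (hΦtr : ∀ X : Matrix (Fin n) (Fin n) ℂ, (Φ X).trace = X.trace)
    (hΦirr : ∀ p : Matrix (Fin n) (Fin n) ℂ, p.IsHermitian → p * p = p →
      (∀ X : Matrix (Fin n) (Fin n) ℂ, Φ (p * X * p) = p * Φ (p * X * p) * p) → p = 0 ∨ p = 1)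
    (hQherm : Q.IsHermitian) (hQidem : Q * Q = Q) (hQne0 : Q ≠ 0) (hQne1 : Q ≠ 1)
    (hPP : ∀ X : Matrix (Fin n) (Fin n) ℂ, PP X = (1 - Q) * X * (1 - Q))
    (hQQ : ∀ X : Matrix (Fin n) (Fin n) ℂ, QQ X = Q * X * Q)
    (hR1 : R ∘ₗ (LinearMap.id - QQ ∘ₗ Φ) = LinearMap.id)
    (hR2 : (LinearMap.id - QQ ∘ₗ Φ) ∘ₗ R = LinearMap.id)
    (φ : Fin n → ℂ) (hφ : star φ ⬝ᵥ φ = 1) :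
    HasSum (fun r : ℕ => ((r : ℂ) + 1) *
        (PP (Φ (((QQ ∘ₗ Φ) ^ r) (Matrix.vecMulVec φ (star φ))))).trace)
      ((R (Matrix.vecMulVec φ (star φ))).trace) ∧
    (R (Matrix.vecMulVec φ (star φ))).trace = (Φ (R (Matrix.vecMulVec φ (star φ)))).trace :=
  mean_hitting_time_eq_trace_general Φ PP QQ R Q hΦpos hΦtr hQherm hQidem hPP hQQ hR1 φ
end

section
/- Let Φ be an irreducible, positive, trace preserving linear map on M_n(ℂ) with invariant state π, Ω(X) = Tr(X)·π, and Z = (I − Φ + Ω)⁻¹. Let Q ∈ M_n(ℂ) be an orthogonal projection with Q ≠ 0 and Q ≠ I_n, ℚ(X) = QXQ, K = Φ∘(I − ℚ∘Φ)⁻², and for a map T on M_n(ℂ) write T₁₁ = (I−ℚ)∘T∘(I−ℚ), T₁₂ = (I−ℚ)∘T∘ℚ, T₂₁ = ℚ∘T∘(I−ℚ), T₂₂ = ℚ∘T∘ℚ. Define D = K₁₁ + K₂₂, N = K − D, L = K − N∘Φ. Then for every unit vector ψ ∈ range(I_n − Q) and every unit vector φ ∈ range(Q), with ρ_ψ = ψψ*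 and ρ_φ = φφ*: N₁₂(ρ_φ) = (D∘Z)₁₁(ρ_ψ) − (D∘Z)₁₂(ρ_φ) + (L∘Z)₁₂(ρ_φ) − (L∘Z)₁₁(ρ_ψ). -/
open Matrix ComplexOrder

/-- Block identity for `N₁₂` (Lemma 4.3, first identity). Here `Z` is the
fundamental map, `R = (I − ℚ∘Φ)⁻¹`, `K = Φ∘R∘R`, `D` is the diagonal block part of `K`,
`N = K − D`, `L = K − N∘Φ`, and blocks are `T₁₁ = (I−ℚ)∘T∘(I−ℚ)`, `T₁₂ = (I−ℚ)∘T∘ℚ`, etc. -/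
theorem block_identity_N12 {n : ℕ}
    (Φ Ω Z QQ R K D N L : Matrix (Fin n) (Fin n) ℂ →ₗ[ℂ] Matrix (Fin n) (Fin n) ℂ)
    (π Q : Matrix (Fin n) (Fin n) ℂ)
    (hΦpos : ∀ X : Matrix (Fin n) (Fin n) ℂ, X.PosSemidef → (Φ X).PosSemidef)
    (hΦtr : ∀ X : Matrix (Fin n) (Fin n) ℂ, (Φ X).trace = X.trace)
    (hΦirr : ∀ p : Matrix (Fin n) (Fin n) ℂ, p.IsHermitian → p * p = p →
      (∀ X : Matrix (Fin n) (Fin n) ℂ, Φ (p * X * p) = p * Φ (p * X * p) * p) → p = 0 ∨ p = 1)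
    (hπpos : π.PosSemidef) (hπtr : π.trace = 1) (hπinv : Φ π = π)
    (hΩ : ∀ X : Matrix (Fin n) (Fin n) ℂ, Ω X = X.trace • π)
    (hZ1 : Z ∘ₗ (LinearMap.id - Φ + Ω) = LinearMap.id)
    (hZ2 : (LinearMap.id - Φ + Ω) ∘ₗ Z = LinearMap.id)
    (hQherm : Q.IsHermitian) (hQidem : Q * Q = Q) (hQne0 : Q ≠ 0) (hQne1 : Q ≠ 1)
    (hQQ : ∀ X : Matrix (Fin n) (Fin n) ℂ, QQ X = Q * X * Q)
    (hR1 : R ∘ₗ (LinearMap.id - QQ ∘ₗ Φ) = LinearMap.id)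
    (hR2 : (LinearMap.id - QQ ∘ₗ Φ) ∘ₗ R = LinearMap.id)
    (hK : K = Φ ∘ₗ R ∘ₗ R)
    (hD : D = (1 - QQ) ∘ₗ K ∘ₗ (1 - QQ) + QQ ∘ₗ K ∘ₗ QQ)
    (hN : N = K - D)
    (hL : L = K - N ∘ₗ Φ)
    (ψ φ : Fin n → ℂ) (hψ : star ψ ⬝ᵥ ψ = 1) (hφ : star φ ⬝ᵥ φ = 1)
    (hψV : (1 - Q) *ᵥ ψ = ψ) (hφV : Q *ᵥ φ = φ) :
    ((1 - QQ) ∘ₗ N ∘ₗ QQ) (Matrix.vecMulVec φ (star φ)) =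
      ((1 - QQ) ∘ₗ (D ∘ₗ Z) ∘ₗ (1 - QQ)) (Matrix.vecMulVec ψ (star ψ))
      - ((1 - QQ) ∘ₗ (D ∘ₗ Z) ∘ₗ QQ) (Matrix.vecMulVec φ (star φ))
      + ((1 - QQ) ∘ₗ (L ∘ₗ Z) ∘ₗ QQ) (Matrix.vecMulVec φ (star φ))
      - ((1 - QQ) ∘ₗ (L ∘ₗ Z) ∘ₗ (1 - QQ)) (Matrix.vecMulVec ψ (star ψ)) := by
  set ρψ := Matrix.vecMulVec ψ (star ψ) with hrψ
  set ρφ := Matrix.vecMulVec φ (star φ) with hrφ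
  -- basic matrix facts
  have hQψ0 : Q *ᵥ ψ = 0 := by
    have h := hψV
    rw [Matrix.sub_mulVec, Matrix.one_mulVec, sub_eq_self] at h
    exact h
  have hmulL : ∀ (a b : Fin n → ℂ), Q * Matrix.vecMulVec a b = Matrix.vecMulVec (Q *ᵥ a) b := by
    intro a b
    ext i j
    simp [Matrix.mul_apply, Matrix.vecMulVec_apply, Matrix.mulVec, dotProduct,
      Finset.sum_mul, mul_assoc]
  have hmulR : ∀ (a b : Fin n → ℂ), Matrix.vecMulVec a b * Q = Matrix.vecMulVec a (b ᵥ* Q) := by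
    intro a b
    ext i j
    simp [Matrix.mul_apply, Matrix.vecMulVec_apply, Matrix.vecMul, dotProduct,
      Finset.mul_sum, mul_assoc]
  have hstarφ : star φ ᵥ* Q = star φ := by
    conv_lhs => rw [← hQherm.eq]
    rw [← Matrix.star_mulVec, hφV]
  -- QQ on the states
  have hQQρφ : QQ ρφ = ρφ := by
    rw [hQQ, hrφ, hmulL, hφV, hmulR, hstarφ]
  have hQQρψ : QQ ρψ = 0 := by
    rw [hQQ, hrψ, hmulL, hQψ0]
    ext i j
    simp [Matrix.mul_apply, Matrix.vecMulVec_apply]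
  have hPρψ : (1 - QQ) ρψ = ρψ := by
    simp [LinearMap.sub_apply, hQQρψ]
  -- QQ idempotent pointwise
  have hQQid : ∀ M : Matrix (Fin n) (Fin n) ℂ, QQ (QQ M) = QQ M := by
    intro M
    simp only [hQQ, mul_assoc]
    rw [hQidem, ← mul_assoc Q Q (M * Q), hQidem]
  have hPid : ∀ M : Matrix (Fin n) (Fin n) ℂ, (1 - QQ) ((1 - QQ) M) = (1 - QQ) M := by
    intro M
    simp only [LinearMap.sub_apply, Module.End.one_apply, map_sub, hQQid]
    abel
  have hQQP : ∀ M : Matrix (Fin n) (Fin n) ℂ, QQ ((1 - QQ) M) = 0 := by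
    intro M
    simp [LinearMap.sub_apply, map_sub, hQQid]
  -- N₁₁ = 0 pointwise
  have hPNP : ∀ M : Matrix (Fin n) (Fin n) ℂ, (1 - QQ) (N ((1 - QQ) M)) = 0 := by
    intro M
    set y := (1 - QQ) M with hy
    have hDy : D y = (1 - QQ) (K y) := by
      rw [hD]
      simp only [LinearMap.add_apply, LinearMap.comp_apply, hy, hPid, hQQP, map_zero, add_zero]
    have hNy : N y = K y - (1 - QQ) (K y) := by rw [hN, LinearMap.sub_apply, hDy]
    rw [hNy, map_sub, hPid (K y), sub_self]
  -- trace facts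
  have htrψ : ρψ.trace = 1 := by
    rw [← hψ]
    simp [hrψ, Matrix.trace, Matrix.diag, Matrix.vecMulVec_apply, dotProduct, mul_comm]
  have htrφ : ρφ.trace = 1 := by
    rw [← hφ]
    simp [hrφ, Matrix.trace, Matrix.diag, Matrix.vecMulVec_apply, dotProduct, mul_comm]
  -- Z preserves trace
  have hZtr : ∀ X : Matrix (Fin n) (Fin n) ℂ, (Z X).trace = X.trace := by
    intro X
    have h := congrArg (fun T => (T X).trace) hZ2
    simp only [LinearMap.comp_apply, LinearMap.add_apply, LinearMap.sub_apply,
      LinearMap.id_apply] at h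
    rw [Matrix.trace_add, Matrix.trace_sub, hΦtr, hΩ, Matrix.trace_smul, hπtr,
      smul_eq_mul, mul_one] at h
    simpa using h
  have hΩZψ : Ω (Z ρψ) = π := by rw [hΩ, hZtr, htrψ, one_smul]
  have hΩZφ : Ω (Z ρφ) = π := by rw [hΩ, hZtr, htrφ, one_smul]
  -- key consequence of hZ2: Φ (Z x) = Z x + Ω (Z x) - x
  have hΦZ : ∀ X : Matrix (Fin n) (Fin n) ℂ, Φ (Z X) = Z X + Ω (Z X) - X := by
    intro X
    have h := congrArg (fun T => T X) hZ2
    simp only [LinearMap.comp_apply, LinearMap.add_apply, LinearMap.sub_apply,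
      LinearMap.id_apply] at h
    have := h
    linear_combination (norm := abel) -this
  -- D x - L x = N (Φ x) - N x
  have hDL : ∀ X : Matrix (Fin n) (Fin n) ℂ, D X - L X = N (Φ X) - N X := by
    intro X
    rw [hL]
    simp only [LinearMap.sub_apply, LinearMap.comp_apply]
    have hNX : N X = K X - D X := by rw [hN]; simp
    rw [hNX]
    abel
  -- main computation
  simp only [LinearMap.comp_apply, hQQρφ, hPρψ]
  have key : ∀ X : Matrix (Fin n) (Fin n) ℂ, X.trace = 1 →
      (1 - QQ) (D (Z X)) - (1 - QQ) (L (Z X)) = (1 - QQ) (N π) - (1 - QQ) (N X) := by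
    intro X hX
    rw [← map_sub, hDL, hΦZ, hΩ, hZtr, hX, one_smul]
    have h2 : N (Z X + π - X) - N (Z X) = N π - N X := by
      simp only [map_add, map_sub]
      abel
    rw [h2, map_sub]
  have k1 := key ρψ htrψ
  have k2 := key ρφ htrφ
  have hz : (1 - QQ) (N ρψ) = 0 := by
    rw [← hPρψ]
    exact hPNP ρψ
  have hre : (1 - QQ) (D (Z ρψ)) - (1 - QQ) (D (Z ρφ)) + (1 - QQ) (L (Z ρφ))
      - (1 - QQ) (L (Z ρψ))
      = ((1 - QQ) (D (Z ρψ)) - (1 - QQ) (L (Z ρψ)))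
        - ((1 - QQ) (D (Z ρφ)) - (1 - QQ) (L (Z ρφ))) := by abel
  rw [hre, k1, k2, hz]
  abel
end

section
/- With the notation of the previous block-matrix setup (Φ irreducible, positive, trace preserving on M_n(ℂ) with invariant state π, Ω(X) = Tr(X)·π, Z = (I − Φ + Ω)⁻¹, Q a nontrivial orthogonal projection, ℚ(X) = QXQ, K = Φ∘(I − ℚ∘Φ)⁻², D = K₁₁ + K₂₂, N = K − D, L = K − N∘Φ): for every unit vector ψ ∈ range(I_n − Q) and every unit vector φ ∈ range(Q), with ρ_ψ = ψψ* and ρ_φ = φφ*: N₂₁(ρ_ψ) = (D∘Z)₂₂(ρ_φ) − (D∘Z)₂₁(ρ_ψ) + (L∘Z)₂₁(ρ_ψ) − (L∘Z)₂₂(ρ_φ). -/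
open Matrix ComplexOrder

/-- Block identity for `N₂₁` (Lemma 4.3, second identity). Here `Z` is the
fundamental map, `R = (I − ℚ∘Φ)⁻¹`, `K = Φ∘R∘R`, `D` is the diagonal block part of `K`,
`N = K − D`, `L = K − N∘Φ`, and blocks are `T₁₁ = (I−ℚ)∘T∘(I−ℚ)`, `T₁₂ = (I−ℚ)∘T∘ℚ`, etc. -/
theorem block_identity_N21 {n : ℕ}
    (Φ Ω Z QQ R K D N L : Matrix (Fin n) (Fin n) ℂ →ₗ[ℂ] Matrix (Fin n) (Fin n) ℂ)
    (π Q : Matrix (Fin n) (Fin n) ℂ)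
    (hΦpos : ∀ X : Matrix (Fin n) (Fin n) ℂ, X.PosSemidef → (Φ X).PosSemidef)
    (hΦtr : ∀ X : Matrix (Fin n) (Fin n) ℂ, (Φ X).trace = X.trace)
    (hΦirr : ∀ p : Matrix (Fin n) (Fin n) ℂ, p.IsHermitian → p * p = p →
      (∀ X : Matrix (Fin n) (Fin n) ℂ, Φ (p * X * p) = p * Φ (p * X * p) * p) → p = 0 ∨ p = 1)
    (hπpos : π.PosSemidef) (hπtr : π.trace = 1) (hπinv : Φ π = π)
    (hΩ : ∀ X : Matrix (Fin n) (Fin n) ℂ, Ω X = X.trace • π)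
    (hZ1 : Z ∘ₗ (LinearMap.id - Φ + Ω) = LinearMap.id)
    (hZ2 : (LinearMap.id - Φ + Ω) ∘ₗ Z = LinearMap.id)
    (hQherm : Q.IsHermitian) (hQidem : Q * Q = Q) (hQne0 : Q ≠ 0) (hQne1 : Q ≠ 1)
    (hQQ : ∀ X : Matrix (Fin n) (Fin n) ℂ, QQ X = Q * X * Q)
    (hR1 : R ∘ₗ (LinearMap.id - QQ ∘ₗ Φ) = LinearMap.id)
    (hR2 : (LinearMap.id - QQ ∘ₗ Φ) ∘ₗ R = LinearMap.id)
    (hK : K = Φ ∘ₗ R ∘ₗ R)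
    (hD : D = (1 - QQ) ∘ₗ K ∘ₗ (1 - QQ) + QQ ∘ₗ K ∘ₗ QQ)
    (hN : N = K - D)
    (hL : L = K - N ∘ₗ Φ)
    (ψ φ : Fin n → ℂ) (hψ : star ψ ⬝ᵥ ψ = 1) (hφ : star φ ⬝ᵥ φ = 1)
    (hψV : (1 - Q) *ᵥ ψ = ψ) (hφV : Q *ᵥ φ = φ) :
    (QQ ∘ₗ N ∘ₗ (1 - QQ)) (Matrix.vecMulVec ψ (star ψ)) =
      (QQ ∘ₗ (D ∘ₗ Z) ∘ₗ QQ) (Matrix.vecMulVec φ (star φ))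
      - (QQ ∘ₗ (D ∘ₗ Z) ∘ₗ (1 - QQ)) (Matrix.vecMulVec ψ (star ψ))
      + (QQ ∘ₗ (L ∘ₗ Z) ∘ₗ (1 - QQ)) (Matrix.vecMulVec ψ (star ψ))
      - (QQ ∘ₗ (L ∘ₗ Z) ∘ₗ QQ) (Matrix.vecMulVec φ (star φ)) := by
  set ρψ := Matrix.vecMulVec ψ (star ψ) with hρψdef
  set ρφ := Matrix.vecMulVec φ (star φ) with hρφdef
  -- Q annihilates ψ
  have hQψ : Q *ᵥ ψ = 0 := by
    have h := hψV
    rw [Matrix.sub_mulVec, Matrix.one_mulVec] at h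
    exact sub_eq_self.mp h
  -- Q * ρψ = 0
  have hQρψ : Q * ρψ = 0 := by
    ext i j
    simp only [hρψdef, Matrix.mul_apply, Matrix.vecMulVec_apply, Matrix.zero_apply,
      ← mul_assoc, ← Finset.sum_mul]
    have : ∑ k, Q i k * ψ k = (Q *ᵥ ψ) i := rfl
    rw [this, hQψ]
    simp
  -- QQ ρψ = 0
  have hQQρψ : QQ ρψ = 0 := by rw [hQQ, hQρψ, Matrix.zero_mul]
  -- star φ ᵥ* Q = star φ
  have hvQ : star φ ᵥ* Q = star φ := by
    conv_lhs => rw [← hQherm]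
    rw [← Matrix.star_mulVec, hφV]
  -- QQ ρφ = ρφ
  have hQQρφ : QQ ρφ = ρφ := by
    rw [hQQ]
    have h1 : Q * ρφ = ρφ := by
      ext i j
      simp only [hρφdef, Matrix.mul_apply, Matrix.vecMulVec_apply, ← mul_assoc,
        ← Finset.sum_mul]
      have : ∑ k, Q i k * φ k = (Q *ᵥ φ) i := rfl
      rw [this, hφV]
    have h2 : ρφ * Q = ρφ := by
      ext i j
      simp only [hρφdef, Matrix.mul_apply, Matrix.vecMulVec_apply, mul_assoc,
        ← Finset.mul_sum]
      have : ∑ k, star φ k * Q k j = (star φ ᵥ* Q) j := rfl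
      rw [this, hvQ]
    rw [h1, h2]
  -- QQ is idempotent
  have hQQi : ∀ X, QQ (QQ X) = QQ X := by
    intro X
    rw [hQQ X, hQQ, show Q * (Q * X * Q) * Q = (Q * Q) * X * (Q * Q) by noncomm_ring, hQidem]
  -- traces
  have htrψ : ρψ.trace = 1 := by
    rw [← hψ]
    simp [hρψdef, Matrix.trace, Matrix.diag, Matrix.vecMulVec_apply, dotProduct, mul_comm]
  have htrφ : ρφ.trace = 1 := by
    rw [← hφ]
    simp [hρφdef, Matrix.trace, Matrix.diag, Matrix.vecMulVec_apply, dotProduct, mul_comm]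
  -- consequence of hZ2
  have hZeq : ∀ X, Z X - Φ (Z X) + Ω (Z X) = X := by
    intro X
    have := LinearMap.congr_fun hZ2 X
    simpa [LinearMap.sub_apply, LinearMap.add_apply] using this
  -- Z preserves trace
  have htrZ : ∀ X, (Z X).trace = X.trace := by
    intro X
    have h := congrArg Matrix.trace (hZeq X)
    rw [Matrix.trace_add, Matrix.trace_sub, hΦtr, hΩ, Matrix.trace_smul, hπtr] at h
    simpa using h
  -- Φ (Z X) = Z X + tr X • π - X
  have hΦZ : ∀ X, Φ (Z X) = Z X + X.trace • π - X := by
    intro X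
    have h := hZeq X
    rw [hΩ, htrZ] at h
    linear_combination (norm := module) -h
  -- QQ ∘ N ∘ QQ = 0
  have hNQQ : ∀ X, QQ (N (QQ X)) = 0 := by
    intro X
    have h0 : (1 - QQ) (QQ X) = 0 := by
      simp [LinearMap.sub_apply, hQQi]
    have hDQQ : D (QQ X) = QQ (K (QQ X)) := by
      rw [hD]
      simp only [LinearMap.add_apply, LinearMap.comp_apply, h0, map_zero, hQQi, zero_add]
    rw [hN]
    simp only [LinearMap.sub_apply, map_sub, hDQQ, hQQi, sub_self]
  -- L (Z X) = D (Z X) + N X - tr X • N π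
  have hLZ : ∀ X, L (Z X) = D (Z X) + N X - X.trace • N π := by
    intro X
    rw [hL]
    simp only [LinearMap.sub_apply, LinearMap.comp_apply, hΦZ X, map_add, map_sub,
      _root_.map_smul]
    have hKN : K (Z X) - N (Z X) = D (Z X) := by
      rw [hN]; simp [LinearMap.sub_apply]
    rw [← hKN]
    abel
  -- now the main computation
  simp only [LinearMap.comp_apply, LinearMap.sub_apply, Module.End.one_apply,
    hQQρψ, hQQρφ, sub_zero, hLZ, map_add, map_sub, _root_.map_smul, htrψ, htrφ, one_smul]
  have hNφ : QQ (N ρφ) = 0 := by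
    rw [← hQQρφ]; exact hNQQ ρφ
  rw [hNφ]
  abel
end

section
/- Let Φ be an irreducible, positive, trace preserving linear map on M_n(ℂ), Q ∈ M_n(ℂ) an orthogonal projection with Q ≠ 0 and Q ≠ I_n, ℚ(X) = QXQ, H = Φ∘(I − ℚ∘Φ)⁻¹, K = Φ∘(I − ℚ∘Φ)⁻², D = K₁₁ + K₂₂ (diagonal blocks of K), N = K − D, L = K − N∘Φ. Then (I − ℚ)∘L = (I − ℚ)∘H, and this map is trace preserving: Tr(L(ρ)) − Tr(ℚ(L(ρ))) = Tr(ρ) for all ρ ∈ M_n(ℂ). -/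
open Matrix ComplexOrder

/-- With `R = (I − ℚ∘Φ)⁻¹`, `H = Φ∘R`, `K = Φ∘R∘R`, `D` the diagonal block
part of `K`, `N = K − D`, `L = K − N∘Φ`: the first block rows of `L` and `H` coincide,
`(I − ℚ)∘L = (I − ℚ)∘H`, and this map is trace preserving. -/
theorem first_block_row_L_eq_H {n : ℕ}
    (Φ QQ R K D N L : Matrix (Fin n) (Fin n) ℂ →ₗ[ℂ] Matrix (Fin n) (Fin n) ℂ)
    (Q : Matrix (Fin n) (Fin n) ℂ)
    (hΦpos : ∀ X : Matrix (Fin n) (Fin n) ℂ, X.PosSemidef → (Φ X).PosSemidef)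
    (hΦtr : ∀ X : Matrix (Fin n) (Fin n) ℂ, (Φ X).trace = X.trace)
    (hΦirr : ∀ p : Matrix (Fin n) (Fin n) ℂ, p.IsHermitian → p * p = p →
      (∀ X : Matrix (Fin n) (Fin n) ℂ, Φ (p * X * p) = p * Φ (p * X * p) * p) → p = 0 ∨ p = 1)
    (hQherm : Q.IsHermitian) (hQidem : Q * Q = Q) (hQne0 : Q ≠ 0) (hQne1 : Q ≠ 1)
    (hQQ : ∀ X : Matrix (Fin n) (Fin n) ℂ, QQ X = Q * X * Q)
    (hR1 : R ∘ₗ (LinearMap.id - QQ ∘ₗ Φ) = LinearMap.id)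
    (hR2 : (LinearMap.id - QQ ∘ₗ Φ) ∘ₗ R = LinearMap.id)
    (hK : K = Φ ∘ₗ R ∘ₗ R)
    (hD : D = (1 - QQ) ∘ₗ K ∘ₗ (1 - QQ) + QQ ∘ₗ K ∘ₗ QQ)
    (hN : N = K - D)
    (hL : L = K - N ∘ₗ Φ) :
    (1 - QQ) ∘ₗ L = (1 - QQ) ∘ₗ (Φ ∘ₗ R) ∧
      ∀ ρ : Matrix (Fin n) (Fin n) ℂ, (L ρ).trace - (QQ (L ρ)).trace = ρ.trace := by
  -- idempotency of the superoperator QQ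
  have hq : QQ * QQ = QQ := by
    apply LinearMap.ext
    intro X
    simp only [Module.End.mul_apply, hQQ]
    simp only [← Matrix.mul_assoc]
    rw [hQidem, Matrix.mul_assoc (Q * X) Q Q, hQidem]
  -- move to ring notation in End
  simp only [← Module.End.mul_eq_comp, ← Module.End.one_eq_id] at hR1 hR2 hK hD hN hL
  have hRs : R * (QQ * Φ) = R - 1 := by
    rw [mul_sub, mul_one] at hR1
    rw [← hR1, sub_sub_cancel]
  have hsR : (QQ * Φ) * R = R - 1 := by
    rw [sub_mul, one_mul] at hR2
    rw [← hR2, sub_sub_cancel]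
  -- key identity: K - K * (QQ * Φ) = Φ * R
  have hKs : K * (QQ * Φ) = K - Φ * R := by
    rw [hK, mul_assoc Φ (R * R), mul_assoc R R, hRs, mul_sub R R 1, mul_one, mul_sub]
  have hKey : K - K * (QQ * Φ) = Φ * R := by
    rw [hKs, sub_sub_cancel]
  have e1 : (1 - QQ) * QQ = 0 := by rw [sub_mul, one_mul, hq, sub_self]
  have e2 : (1 - QQ) * (1 - QQ) = 1 - QQ := by
    rw [mul_sub, mul_one, e1, sub_zero]
  have hD1 : (1 - QQ) * D = (1 - QQ) * (K * (1 - QQ)) := by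
    rw [hD, mul_add, ← mul_assoc (1 - QQ) (1 - QQ), e2, ← mul_assoc (1 - QQ) QQ, e1, zero_mul, add_zero]
  have hN1 : (1 - QQ) * N = (1 - QQ) * (K * QQ) := by
    rw [hN, mul_sub, hD1, ← mul_sub, mul_sub K (1 : _) QQ, mul_one, sub_sub_cancel]
  have hmain : (1 - QQ) * L = (1 - QQ) * (Φ * R) := by
    rw [hL, mul_sub, ← mul_assoc, hN1, mul_assoc, mul_assoc, ← mul_sub, hKey]
  constructor
  · simpa only [Module.End.mul_eq_comp] using hmain
  · intro ρ
    have h1 : L ρ - QQ (L ρ) = Φ (R ρ) - QQ (Φ (R ρ)) := by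
      have := congrArg (fun f => f ρ) hmain
      simpa only [LinearMap.sub_apply, Module.End.mul_apply, Module.End.one_apply] using this
    have h2 : QQ (Φ (R ρ)) = R ρ - ρ := by
      have := congrArg (fun f => f ρ) hsR
      simpa only [LinearMap.sub_apply, Module.End.mul_apply, Module.End.one_apply] using this
    have h3 : (L ρ).trace - (QQ (L ρ)).trace = (L ρ - QQ (L ρ)).trace := by
      rw [trace_sub]
    rw [h3, h1, trace_sub, h2, trace_sub, hΦtr]
    ring
end

section
/- (MHTF for positive maps and orthogonal states.) Let Φ be an irreducible, positive, trace preserving linear map on M_n(ℂ) with invariant state π, Ω(X) = Tr(X)·π, Z = (I − Φ + Ω)⁻¹. Let V ⊆ ℂⁿ be a subspace with V ≠ 0 and V ≠ ℂⁿ, P the orthogonal projection onto V, Q = I_n − P, ℙ(X) = PXP, ℚ(X) = QXQ, and K = Φ∘(I − ℚ∘Φ)⁻². Then for every unit vector ψ ∈ V and every unit vector φ ∈ V⊥, with ρ_ψ = ψψ* and ρ_φ = φφ*: τ(φ→V) = Tr(K₁₁(Z₁₁(ρ_ψ) − Z₁₂(ρ_φ))), where τ(φ→V) = Σ_{r≥1}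 r·Tr(ℙ(Φ((ℚ∘Φ)^{r−1}(ρ_φ)))), K₁₁ = (I−ℚ)∘K∘(I−ℚ), Z₁₁ = (I−ℚ)∘Z∘(I−ℚ), and Z₁₂ = (I−ℚ)∘Z∘ℚ. -/
open Matrix ComplexOrder Filter Topology

/-! With `N = ℚ ∘ Φ`, positivity and trace preservation make `b m = Tr (Nᵐ ρ_φ)` a nonnegative
decreasing sequence whose differences `b m - b (m + 1) = Tr ℙ(Φ(Nᵐ ρ_φ))` are the hitting
probabilities, so Abel summation turns `τ(φ→V)` into `∑ b m`. Telescoping `R (X - N X) = X` gives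
`∑_{m<M} b m = Tr R ρ_φ - Tr R (Nᴹ ρ_φ)`; as `|Tr R X| ≤ C Tr X` for positive `X`, this sum
converges to `Tr R ρ_φ`. On the other side `Y = Z (ρ_ψ - ρ_φ)` has trace zero and
`Φ Y = Y - ρ_ψ + ρ_φ`, so `(I - ℚ) Y = (I - N) Y + ρ_φ`; together with
`Tr ((I - ℚ) Φ R W) = Tr W` this collapses the block expression to `Tr R ρ_φ` as well. -/

lemma sum_range_add_one_mul_sub (β : ℕ → ℝ) (m : ℕ) :
    ∑ r ∈ Finset.range m, ((r : ℝ) + 1) * (β r - β (r + 1)) =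
      ∑ r ∈ Finset.range m, (β r - β m) := by
  induction m with
  | zero => simp
  | succ m ih =>
    rw [Finset.sum_range_succ, ih, Finset.sum_range_succ]
    simp only [Finset.sum_sub_distrib, Finset.sum_const, Finset.card_range, nsmul_eq_mul]
    ring

theorem HasSum.add_one_mul_sub_of_antitone {β : ℕ → ℝ} {B : ℝ} (hβ : HasSum β B)
    (hanti : Antitone β) : HasSum (fun r : ℕ => ((r : ℝ) + 1) * (β r - β (r + 1))) B := by
  have hlim := hβ.summable.tendsto_atTop_zero
  have hnonneg : ∀ r, 0 ≤ β r := hanti.le_of_tendsto hlim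
  rw [hasSum_iff_tendsto_nat_of_nonneg
    (fun r => mul_nonneg (by positivity) (sub_nonneg.2 (hanti (Nat.le_succ r)))),
    funext (sum_range_add_one_mul_sub β), ← hβ.tsum_eq]
  let F : ℕ → ℕ → ℝ := fun m r => if r < m then β r - β m else 0
  have hF (m : ℕ) : ∑ r ∈ Finset.range m, (β r - β m) = ∑' r, F m r := by
    rw [tsum_eq_sum (s := Finset.range m) fun r hr => if_neg (by simpa using hr)]
    exact Finset.sum_congr rfl fun r hr => (if_pos (Finset.mem_range.1 hr)).symm
  simp_rw [hF]
  refine tendsto_tsum_of_dominated_convergence hβ.summable (fun r => ?_) ?_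
  · have : Tendsto (fun m => β r - β m) atTop (𝓝 (β r - 0)) := tendsto_const_nhds.sub hlim
    rw [sub_zero] at this
    refine this.congr' ?_
    filter_upwards [eventually_gt_atTop r] with m hm using (if_pos hm).symm
  · refine Eventually.of_forall fun m r => ?_
    by_cases hr : r < m
    · simp only [F, if_pos hr, Real.norm_eq_abs]
      rw [abs_of_nonneg (sub_nonneg.2 (hanti hr.le))]
      linarith [hnonneg m]
    · simp [F, if_neg hr, hnonneg r]

lemma HasSum.ofReal_add_one_mul_sub_of_antitone {β : ℕ → ℝ} {z : ℂ}
    (hβ : HasSum (fun m => (β m : ℂ)) z) (hanti : Antitone β) :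
    HasSum (fun r : ℕ => ((r : ℂ) + 1) * (β r - β (r + 1))) z := by
  have hre := Complex.hasSum_re hβ
  simp only [Complex.ofReal_re] at hre
  rw [hβ.unique (Complex.hasSum_ofReal.2 hre)]
  exact_mod_cast Complex.hasSum_ofReal.2 (hre.add_one_mul_sub_of_antitone hanti)

namespace Matrix

variable {ι : Type*} [Fintype ι]

lemma PosSemidef.ofReal_trace_re {M : Matrix ι ι ℂ} (hM : M.PosSemidef) :
    (M.trace.re : ℂ) = M.trace :=
  (Complex.eq_re_of_ofReal_le (by rw [Complex.ofReal_zero]; exact hM.trace_nonneg)).symm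

lemma PosSemidef.re_apply_le_trace_re {M : Matrix ι ι ℂ} (hM : M.PosSemidef) (i : ι) :
    (M i i).re ≤ M.trace.re := by
  rw [trace, Complex.re_sum]
  exact Finset.single_le_sum (f := fun k => (M k k).re)
    (fun k _ => (Complex.le_def.1 hM.diag_nonneg).1) (Finset.mem_univ i)

lemma PosSemidef.norm_apply_le_trace_re {M : Matrix ι ι ℂ} (hM : M.PosSemidef) (i j : ι) :
    ‖M i j‖ ≤ M.trace.re := by
  -- the principal `2 × 2` minor gives `‖M i j‖ ^ 2 ≤ M i i * M j j`
  have hdet := (hM.submatrix ![i, j]).det_nonneg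
  rw [det_fin_two] at hdet
  simp only [Fin.isValue, submatrix_apply, cons_val_zero, cons_val_one, sub_nonneg] at hdet
  have hdiag (k : ι) : M k k = ((M k k).re : ℂ) :=
    Complex.eq_re_of_ofReal_le (by rw [Complex.ofReal_zero]; exact hM.diag_nonneg)
  rw [← hM.1.apply j i, RCLike.star_def, RCLike.mul_conj, hdiag i, hdiag j] at hdet
  replace hdet : ‖M i j‖ ^ 2 ≤ (M i i).re * (M j j).re :=
    Complex.real_le_real.1 (by push_cast; exact hdet)
  have hi := hM.re_apply_le_trace_re i
  have hj := hM.re_apply_le_trace_re j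
  have hj0 : 0 ≤ (M j j).re := (Complex.le_def.1 hM.diag_nonneg).1
  nlinarith [norm_nonneg (M i j)]

lemma exists_norm_le_mul_trace_re (f : Matrix ι ι ℂ →ₗ[ℂ] ℂ) :
    ∃ C, 0 ≤ C ∧ ∀ M : Matrix ι ι ℂ, M.PosSemidef → ‖f M‖ ≤ C * M.trace.re := by
  let g := LinearMap.toContinuousLinearMap (f ∘ₗ (ofLinearEquiv ℂ).toLinearMap)
  refine ⟨‖g‖, norm_nonneg g, fun M hM => ?_⟩
  have hM_norm : ‖of.symm M‖ ≤ M.trace.re := by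
    have h0 := (Complex.le_def.1 hM.trace_nonneg).1
    exact (pi_norm_le_iff_of_nonneg h0).2 fun i =>
      (pi_norm_le_iff_of_nonneg h0).2 fun j => hM.norm_apply_le_trace_re i j
  calc ‖f M‖ = ‖g (of.symm M)‖ := rfl
    _ ≤ ‖g‖ * ‖of.symm M‖ := g.le_opNorm _
    _ ≤ _ := by gcongr

lemma PosSemidef.mul_mul_of_isHermitian {X P : Matrix ι ι ℂ} (hX : X.PosSemidef)
    (hP : P.IsHermitian) : (P * X * P).PosSemidef := by
  simpa only [hP.eq] using hX.conjTranspose_mul_mul_same P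

lemma trace_mul_mul_add_trace_one_sub_mul_mul [DecidableEq ι] {P : Matrix ι ι ℂ}
    (hP : IsIdempotentElem P) (X : Matrix ι ι ℂ) :
    (P * X * P).trace + ((1 - P) * X * (1 - P)).trace = X.trace := by
  rw [trace_mul_cycle, trace_mul_cycle (1 - P), hP.eq, hP.one_sub.eq, ← trace_add, ← add_mul,
    add_sub_cancel, one_mul]

lemma mul_vecMulVec_mul_of_mulVec_eq_zero {Q : Matrix ι ι ℂ} {v : ι → ℂ} (hv : Q *ᵥ v = 0)
    (w : ι → ℂ) : Q * vecMulVec v w * Q = 0 := by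
  rw [mul_vecMulVec, hv, zero_vecMulVec, Matrix.zero_mul]

lemma mul_vecMulVec_star_mul_of_mulVec_eq {Q : Matrix ι ι ℂ} (hQ : Q.IsHermitian) {v : ι → ℂ}
    (hv : Q *ᵥ v = v) : Q * vecMulVec v (star v) * Q = vecMulVec v (star v) := by
  rw [mul_vecMulVec, hv, vecMulVec_mul, ← hQ.eq, ← star_mulVec, hv]

end Matrix

section Orbit

variable {ι : Type*} {N R : Matrix ι ι ℂ →ₗ[ℂ] Matrix ι ι ℂ}

lemma posSemidef_pow_apply_s13 (hN : ∀ X, X.PosSemidef → (N X).PosSemidef) {ρ : Matrix ι ι ℂ}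
    (hρ : ρ.PosSemidef) (m : ℕ) : ((N ^ m) ρ).PosSemidef := by
  induction m with
  | zero => exact hρ
  | succ m ih => rw [pow_succ', Module.End.mul_apply]; exact hN _ ih

variable [Fintype ι]

lemma sum_range_trace_pow_apply (hR : R ∘ₗ (LinearMap.id - N) = LinearMap.id)
    (ρ : Matrix ι ι ℂ) (m : ℕ) :
    ∑ r ∈ Finset.range m, ((N ^ r) ρ).trace = (R ρ).trace - (R ((N ^ m) ρ)).trace := by
  have htel := Finset.sum_range_sub' (fun r => (R ((N ^ r) ρ)).trace) m
  rw [pow_zero, Module.End.one_apply] at htel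
  rw [← htel]
  refine Finset.sum_congr rfl fun r _ => ?_
  rw [← trace_sub, ← map_sub, pow_succ', Module.End.mul_apply]
  exact congrArg trace (LinearMap.congr_fun hR _).symm

lemma antitone_trace_re_pow_apply (hNpos : ∀ X, X.PosSemidef → (N X).PosSemidef)
    (hNtr : ∀ X, X.PosSemidef → (N X).trace ≤ X.trace) {ρ : Matrix ι ι ℂ} (hρ : ρ.PosSemidef) :
    Antitone fun m => ((N ^ m) ρ).trace.re :=
  antitone_nat_of_succ_le fun m => by
    simpa only [pow_succ', Module.End.mul_apply] using
      (Complex.le_def.1 (hNtr _ (posSemidef_pow_apply_s13 hNpos hρ m))).1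

theorem hasSum_trace_pow_apply (hNpos : ∀ X, X.PosSemidef → (N X).PosSemidef)
    (hNtr : ∀ X, X.PosSemidef → (N X).trace ≤ X.trace)
    (hR : R ∘ₗ (LinearMap.id - N) = LinearMap.id) {ρ : Matrix ι ι ℂ} (hρ : ρ.PosSemidef) :
    HasSum (fun m => ((N ^ m) ρ).trace) (R ρ).trace := by
  have hX := posSemidef_pow_apply_s13 hNpos hρ
  set β : ℕ → ℝ := fun m => ((N ^ m) ρ).trace.re with hβ
  have hβ_nonneg (m : ℕ) : 0 ≤ β m := (Complex.le_def.1 (hX m).trace_nonneg).1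
  have hβ_anti : Antitone β := antitone_trace_re_pow_apply hNpos hNtr hρ
  obtain ⟨C, hC_nonneg, hC⟩ :=
    Matrix.exists_norm_le_mul_trace_re (Matrix.traceLinearMap ι ℂ ℂ ∘ₗ R)
  have hRX (m : ℕ) : ‖(R ((N ^ m) ρ)).trace‖ ≤ C * β m := hC _ (hX m)
  have hβ_sum : Summable β := by
    refine summable_of_sum_range_le hβ_nonneg (c := ‖(R ρ).trace‖ + C * β 0) fun m => ?_
    have h := congrArg Complex.re (sum_range_trace_pow_apply hR ρ m)
    rw [Complex.re_sum, Complex.sub_re] at h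
    rw [h]
    have h_first := Complex.re_le_norm (R ρ).trace
    have h_last := neg_le_of_abs_le (Complex.abs_re_le_norm (R ((N ^ m) ρ)).trace)
    have h_mono := mul_le_mul_of_nonneg_left (hβ_anti (Nat.zero_le m)) hC_nonneg
    linarith [hRX m]
  have hRX_lim : Tendsto (fun m => (R ((N ^ m) ρ)).trace) atTop (𝓝 0) :=
    squeeze_zero_norm hRX (by simpa using hβ_sum.tendsto_atTop_zero.const_mul C)
  have hb_sum : Summable fun m => ((N ^ m) ρ).trace := by
    simpa only [hβ, (hX _).ofReal_trace_re] using Complex.summable_ofReal.2 hβ_sum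
  rw [hb_sum.hasSum_iff_tendsto_nat]
  simpa [sum_range_trace_pow_apply hR] using tendsto_const_nhds.sub hRX_lim

end Orbit

section Blocks

variable {ι : Type*} [Fintype ι] {Φ Ω Z QQ R : Matrix ι ι ℂ →ₗ[ℂ] Matrix ι ι ℂ}
  {π : Matrix ι ι ℂ}

lemma trace_fundamental_apply_eq_zero (hΦtr : ∀ X, (Φ X).trace = X.trace)
    (hΩ : ∀ X, Ω X = X.trace • π) (hπ : π.trace = 1)
    (hZ : (LinearMap.id - Φ + Ω) ∘ₗ Z = LinearMap.id) {D : Matrix ι ι ℂ} (hD : D.trace = 0) :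
    (Z D).trace = 0 := by
  have h := congrArg trace (LinearMap.congr_fun hZ D)
  simpa [trace_add, trace_sub, hΦtr, hΩ, hπ, hD] using h

lemma map_fundamental_apply_eq_sub (hΦtr : ∀ X, (Φ X).trace = X.trace)
    (hΩ : ∀ X, Ω X = X.trace • π) (hπ : π.trace = 1)
    (hZ : (LinearMap.id - Φ + Ω) ∘ₗ Z = LinearMap.id) {D : Matrix ι ι ℂ} (hD : D.trace = 0) :
    Φ (Z D) = Z D - D := by
  have h := LinearMap.congr_fun hZ D
  simp only [LinearMap.comp_apply, LinearMap.add_apply, LinearMap.sub_apply, LinearMap.id_apply,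
    hΩ, trace_fundamental_apply_eq_zero hΦtr hΩ hπ hZ hD, zero_smul, add_zero] at h
  exact eq_sub_iff_add_eq.2 (sub_eq_iff_eq_add'.1 h).symm

lemma trace_sub_compression_map_resolvent (hΦtr : ∀ X, (Φ X).trace = X.trace)
    (hR : (LinearMap.id - QQ ∘ₗ Φ) ∘ₗ R = LinearMap.id) (W : Matrix ι ι ℂ) :
    (Φ (R W) - QQ (Φ (R W))).trace = W.trace := by
  have h := LinearMap.congr_fun hR W
  simp only [LinearMap.comp_apply, LinearMap.sub_apply, LinearMap.id_apply] at h
  rw [trace_sub, hΦtr, ← trace_sub, h]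

theorem trace_blocks_eq_trace_resolvent (hΦtr : ∀ X, (Φ X).trace = X.trace)
    (hΩ : ∀ X, Ω X = X.trace • π) (hπ : π.trace = 1)
    (hZ : (LinearMap.id - Φ + Ω) ∘ₗ Z = LinearMap.id) (hQQ : ∀ X, QQ (QQ X) = QQ X)
    (hR₁ : R ∘ₗ (LinearMap.id - QQ ∘ₗ Φ) = LinearMap.id)
    (hR₂ : (LinearMap.id - QQ ∘ₗ Φ) ∘ₗ R = LinearMap.id) {σ ρ : Matrix ι ι ℂ}
    (hσ : QQ σ = 0) (hρ : QQ ρ = ρ) (htr : σ.trace = ρ.trace) :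
    (((1 - QQ) ∘ₗ (Φ ∘ₗ R ∘ₗ R) ∘ₗ (1 - QQ))
      (((1 - QQ) ∘ₗ Z ∘ₗ (1 - QQ)) σ - ((1 - QQ) ∘ₗ Z ∘ₗ QQ) ρ)).trace = (R ρ).trace := by
  have hD : (σ - ρ).trace = 0 := by rw [trace_sub, htr, sub_self]
  set Y := Z (σ - ρ)
  have hQQΦY : QQ (Φ Y) = QQ Y + ρ := by
    rw [map_fundamental_apply_eq_sub hΦtr hΩ hπ hZ hD, map_sub QQ Y, map_sub QQ σ, hσ, hρ]
    abel
  have hinner : ((1 - QQ) ∘ₗ Z ∘ₗ (1 - QQ)) σ - ((1 - QQ) ∘ₗ Z ∘ₗ QQ) ρ = Y - QQ Y := by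
    simp only [Y, LinearMap.comp_apply, LinearMap.sub_apply, Module.End.one_apply, hσ, hρ,
      sub_zero, map_sub]
    abel
  have hRY : R (Y - QQ Y) = Y + R ρ := by
    have h := LinearMap.congr_fun hR₁ Y
    simp only [LinearMap.comp_apply, LinearMap.sub_apply, LinearMap.id_apply] at h
    rw [show Y - QQ Y = (Y - QQ (Φ Y)) + ρ by rw [hQQΦY]; abel, map_add, h]
  rw [hinner]
  simp only [LinearMap.comp_apply, LinearMap.sub_apply, Module.End.one_apply]
  rw [map_sub QQ Y, hQQ, sub_self, sub_zero, trace_sub_compression_map_resolvent hΦtr hR₂, hRY,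
    trace_add, trace_fundamental_apply_eq_zero hΦtr hΩ hπ hZ hD, zero_add]

end Blocks

section HittingTime

variable {ι : Type*} [Fintype ι] [DecidableEq ι] {Φ PP QQ R : Matrix ι ι ℂ →ₗ[ℂ] Matrix ι ι ℂ}
  {P Q : Matrix ι ι ℂ}

theorem hasSum_mean_hitting_time (hΦpos : ∀ X, X.PosSemidef → (Φ X).PosSemidef)
    (hΦtr : ∀ X, (Φ X).trace = X.trace) (hP : P.IsHermitian) (hP_idem : IsIdempotentElem P)
    (hQ : Q = 1 - P) (hPP : ∀ X, PP X = P * X * P) (hQQ : ∀ X, QQ X = Q * X * Q)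
    (hR : R ∘ₗ (LinearMap.id - QQ ∘ₗ Φ) = LinearMap.id) {ρ : Matrix ι ι ℂ}
    (hρ : ρ.PosSemidef) :
    HasSum (fun r : ℕ => ((r : ℂ) + 1) * (PP (Φ (((QQ ∘ₗ Φ) ^ r) ρ))).trace) (R ρ).trace := by
  set N := QQ ∘ₗ Φ
  have hterm (X : Matrix ι ι ℂ) : (PP (Φ X)).trace = X.trace - (N X).trace := by
    rw [eq_sub_iff_add_eq, ← hΦtr X, hPP, LinearMap.comp_apply, hQQ, hQ,
      trace_mul_mul_add_trace_one_sub_mul_mul hP_idem]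
  have hNpos (X : Matrix ι ι ℂ) (hX : X.PosSemidef) : (N X).PosSemidef := by
    rw [LinearMap.comp_apply, hQQ, hQ]
    exact (hΦpos X hX).mul_mul_of_isHermitian (isHermitian_one.sub hP)
  have hNtr (X : Matrix ι ι ℂ) (hX : X.PosSemidef) : (N X).trace ≤ X.trace := by
    have h := (hΦpos X hX).mul_mul_of_isHermitian hP |>.trace_nonneg
    rwa [← hPP, hterm, sub_nonneg] at h
  have hpow := posSemidef_pow_apply_s13 hNpos hρ
  have hβ : HasSum (fun m => ((((N ^ m) ρ).trace.re : ℝ) : ℂ)) (R ρ).trace := by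
    simpa only [(hpow _).ofReal_trace_re] using hasSum_trace_pow_apply hNpos hNtr hR hρ
  convert hβ.ofReal_add_one_mul_sub_of_antitone (antitone_trace_re_pow_apply hNpos hNtr hρ)
    using 2 with r
  rw [hterm, pow_succ', Module.End.mul_apply, (hpow r).ofReal_trace_re,
    (hNpos _ (hpow r)).ofReal_trace_re]

end HittingTime

theorem mhtf_orthogonal_general {n : ℕ}
    (Φ Ω Z PP QQ R K : Matrix (Fin n) (Fin n) ℂ →ₗ[ℂ] Matrix (Fin n) (Fin n) ℂ)
    (π P Q : Matrix (Fin n) (Fin n) ℂ)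
    (hΦpos : ∀ X : Matrix (Fin n) (Fin n) ℂ, X.PosSemidef → (Φ X).PosSemidef)
    (hΦtr : ∀ X : Matrix (Fin n) (Fin n) ℂ, (Φ X).trace = X.trace)
    (hπtr : π.trace = 1)
    (hΩ : ∀ X : Matrix (Fin n) (Fin n) ℂ, Ω X = X.trace • π)
    (hZ2 : (LinearMap.id - Φ + Ω) ∘ₗ Z = LinearMap.id)
    (hPherm : P.IsHermitian) (hPidem : P * P = P)
    (hQ : Q = 1 - P)
    (hPP : ∀ X : Matrix (Fin n) (Fin n) ℂ, PP X = P * X * P)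
    (hQQ : ∀ X : Matrix (Fin n) (Fin n) ℂ, QQ X = Q * X * Q)
    (hR1 : R ∘ₗ (LinearMap.id - QQ ∘ₗ Φ) = LinearMap.id)
    (hR2 : (LinearMap.id - QQ ∘ₗ Φ) ∘ₗ R = LinearMap.id)
    (hK : K = Φ ∘ₗ R ∘ₗ R)
    (ψ φ : Fin n → ℂ) (hψ : star ψ ⬝ᵥ ψ = 1) (hφ : star φ ⬝ᵥ φ = 1)
    (hψV : P *ᵥ ψ = ψ) (hφV : Q *ᵥ φ = φ) :
    HasSum (fun r : ℕ => ((r : ℂ) + 1) *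
        (PP (Φ (((QQ ∘ₗ Φ) ^ r) (Matrix.vecMulVec φ (star φ))))).trace)
      ((((1 - QQ) ∘ₗ K ∘ₗ (1 - QQ))
        (((1 - QQ) ∘ₗ Z ∘ₗ (1 - QQ)) (Matrix.vecMulVec ψ (star ψ))
          - ((1 - QQ) ∘ₗ Z ∘ₗ QQ) (Matrix.vecMulVec φ (star φ)))).trace) := by
  have hQ_herm : Q.IsHermitian := hQ ▸ isHermitian_one.sub hPherm
  have hQ_idem : IsIdempotentElem Q := hQ ▸ IsIdempotentElem.one_sub hPidem
  have hQQ_idem (X : Matrix (Fin n) (Fin n) ℂ) : QQ (QQ X) = QQ X := by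
    rw [hQQ, hQQ, ← Matrix.mul_assoc, ← Matrix.mul_assoc, hQ_idem.eq, Matrix.mul_assoc,
      hQ_idem.eq]
  have hQψ : Q *ᵥ ψ = 0 := by rw [hQ, sub_mulVec, one_mulVec, hψV, sub_self]
  have htr : (vecMulVec ψ (star ψ)).trace = (vecMulVec φ (star φ)).trace := by
    rw [trace_vecMulVec, trace_vecMulVec, dotProduct_comm, hψ, dotProduct_comm, hφ]
  rw [hK, trace_blocks_eq_trace_resolvent hΦtr hΩ hπtr hZ2 hQQ_idem hR1 hR2
    (by rw [hQQ]; exact mul_vecMulVec_mul_of_mulVec_eq_zero hQψ _)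
    (by rw [hQQ]; exact mul_vecMulVec_star_mul_of_mulVec_eq hQ_herm hφV) htr]
  exact hasSum_mean_hitting_time hΦpos hΦtr hPherm hPidem hQ hPP hQQ hR1
    (posSemidef_vecMulVec_self_star φ)

/-- MHTF for positive maps and orthogonal states: for an irreducible,
positive, trace preserving `Φ` with fundamental map `Z`, a nontrivial subspace `V` with
orthogonal projection `P`, `Q = I − P`, `ℙ(X) = PXP`, `ℚ(X) = QXQ`, `R = (I − ℚ∘Φ)⁻¹`,
`K = Φ∘R∘R`: for unit vectors `ψ ∈ V`, `φ ∈ V⊥`,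
`τ(φ→V) = Σ_{r≥1} r·Tr(ℙ(Φ((ℚ∘Φ)^{r−1}(ρ_φ)))) = Tr(K₁₁(Z₁₁(ρ_ψ) − Z₁₂(ρ_φ)))`. -/
theorem mhtf_orthogonal {n : ℕ}
    (Φ Ω Z PP QQ R K : Matrix (Fin n) (Fin n) ℂ →ₗ[ℂ] Matrix (Fin n) (Fin n) ℂ)
    (π P Q : Matrix (Fin n) (Fin n) ℂ)
    (hΦpos : ∀ X : Matrix (Fin n) (Fin n) ℂ, X.PosSemidef → (Φ X).PosSemidef)
    (hΦtr : ∀ X : Matrix (Fin n) (Fin n) ℂ, (Φ X).trace = X.trace)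
    (hΦirr : ∀ p : Matrix (Fin n) (Fin n) ℂ, p.IsHermitian → p * p = p →
      (∀ X : Matrix (Fin n) (Fin n) ℂ, Φ (p * X * p) = p * Φ (p * X * p) * p) → p = 0 ∨ p = 1)
    (hπpos : π.PosSemidef) (hπtr : π.trace = 1) (hπinv : Φ π = π)
    (hΩ : ∀ X : Matrix (Fin n) (Fin n) ℂ, Ω X = X.trace • π)
    (hZ1 : Z ∘ₗ (LinearMap.id - Φ + Ω) = LinearMap.id)
    (hZ2 : (LinearMap.id - Φ + Ω) ∘ₗ Z = LinearMap.id)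
    (hPherm : P.IsHermitian) (hPidem : P * P = P) (hPne0 : P ≠ 0) (hPne1 : P ≠ 1)
    (hQ : Q = 1 - P)
    (hPP : ∀ X : Matrix (Fin n) (Fin n) ℂ, PP X = P * X * P)
    (hQQ : ∀ X : Matrix (Fin n) (Fin n) ℂ, QQ X = Q * X * Q)
    (hR1 : R ∘ₗ (LinearMap.id - QQ ∘ₗ Φ) = LinearMap.id)
    (hR2 : (LinearMap.id - QQ ∘ₗ Φ) ∘ₗ R = LinearMap.id)
    (hK : K = Φ ∘ₗ R ∘ₗ R)
    (ψ φ : Fin n → ℂ) (hψ : star ψ ⬝ᵥ ψ = 1) (hφ : star φ ⬝ᵥ φ = 1)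
    (hψV : P *ᵥ ψ = ψ) (hφV : Q *ᵥ φ = φ) :
    HasSum (fun r : ℕ => ((r : ℂ) + 1) *
        (PP (Φ (((QQ ∘ₗ Φ) ^ r) (Matrix.vecMulVec φ (star φ))))).trace)
      ((((1 - QQ) ∘ₗ K ∘ₗ (1 - QQ))
        (((1 - QQ) ∘ₗ Z ∘ₗ (1 - QQ)) (Matrix.vecMulVec ψ (star ψ))
          - ((1 - QQ) ∘ₗ Z ∘ₗ QQ) (Matrix.vecMulVec φ (star φ)))).trace) :=
  mhtf_orthogonal_general Φ Ω Z PP QQ R K π P Q hΦpos hΦtr hπtr hΩ hZ2 hPherm hPidem hQ hPP hQQ hR1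
    hR2 hK ψ φ hψ hφ hψV hφV
end

section
/- Let Φ be an irreducible, positive, trace preserving linear map on M_n(ℂ) with invariant state π, Ω(X) = Tr(X)·π, Z = (I − Φ + Ω)⁻¹. Let V ⊆ ℂⁿ be a subspace with V ≠ 0 and V ≠ ℂⁿ, P the orthogonal projection onto V, Q = I_n − P, ℚ(X) = QXQ, K = Φ∘(I − ℚ∘Φ)⁻², and D = K₁₁ + K₂₂ (diagonal blocks of K). Then the quantity Tr((D∘Z)₁₁(ρ_ψ)) = Tr(K₁₁(Z₁₁(ρ_ψ))) is independent of the choice of unit vector ψ ∈ V: for any two unit vectors ψ, ψ' ∈ V, Tr(K₁₁(Z₁₁(ψψ*))) = Tr(K₁₁(Z₁₁(ψ'ψ'*))). -/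
open Matrix ComplexOrder

lemma trace_DZ11_value {n : ℕ}
    (Φ Ω Z QQ R K : Matrix (Fin n) (Fin n) ℂ →ₗ[ℂ] Matrix (Fin n) (Fin n) ℂ)
    (π P Q : Matrix (Fin n) (Fin n) ℂ)
    (hΦtr : ∀ X : Matrix (Fin n) (Fin n) ℂ, (Φ X).trace = X.trace)
    (hπtr : π.trace = 1)
    (hΩ : ∀ X : Matrix (Fin n) (Fin n) ℂ, Ω X = X.trace • π)
    (hZ2 : (LinearMap.id - Φ + Ω) ∘ₗ Z = LinearMap.id)
    (hPidem : P * P = P)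
    (hQ : Q = 1 - P)
    (hQQ : ∀ X : Matrix (Fin n) (Fin n) ℂ, QQ X = Q * X * Q)
    (hR1 : R ∘ₗ (LinearMap.id - QQ ∘ₗ Φ) = LinearMap.id)
    (hR2 : (LinearMap.id - QQ ∘ₗ Φ) ∘ₗ R = LinearMap.id)
    (hK : K = Φ ∘ₗ R ∘ₗ R)
    (ψ : Fin n → ℂ) (hψ : star ψ ⬝ᵥ ψ = 1) (hψV : P *ᵥ ψ = ψ) :
    ((((1 - QQ) ∘ₗ K ∘ₗ (1 - QQ))
        (((1 - QQ) ∘ₗ Z ∘ₗ (1 - QQ)) (Matrix.vecMulVec ψ (star ψ)))).trace) =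
      1 + (R (Q * π * Q)).trace := by
  set ρ : Matrix (Fin n) (Fin n) ℂ := Matrix.vecMulVec ψ (star ψ) with hρ
  have hQidem : Q * Q = Q := by
    rw [hQ]
    have : (1 - P) * (1 - P) = 1 - P - (P - P * P) := by noncomm_ring
    rw [this, hPidem, sub_self, sub_zero]
  have hQψ : Q *ᵥ ψ = 0 := by
    rw [hQ, sub_mulVec, one_mulVec, hψV, sub_self]
  have hQρ : Q * ρ = 0 := by
    ext i j
    have h0 : (Q *ᵥ ψ) i = 0 := by rw [hQψ]; rfl
    simp only [Matrix.mul_apply, hρ, Matrix.vecMulVec_apply, Matrix.zero_apply]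
    calc ∑ k, Q i k * (ψ k * star ψ j) = (∑ k, Q i k * ψ k) * star ψ j := by
          rw [Finset.sum_mul]; exact Finset.sum_congr rfl fun k _ => (mul_assoc _ _ _).symm
      _ = 0 := by
          rw [show (∑ k, Q i k * ψ k) = (Q *ᵥ ψ) i from rfl, h0, zero_mul]
  have hρtr : ρ.trace = 1 := by
    rw [← hψ]
    simp [hρ, Matrix.trace, Matrix.diag, Matrix.vecMulVec_apply, dotProduct, mul_comm]
  -- pointwise identities
  have hone : ∀ X : Matrix (Fin n) (Fin n) ℂ, (1 - QQ) X = X - Q * X * Q := by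
    intro X
    simp [LinearMap.sub_apply, hQQ, Module.End.one_apply]
  have hZ' : ∀ X : Matrix (Fin n) (Fin n) ℂ,
      Z X - Φ (Z X) + (Z X).trace • π = X := by
    intro X
    have h := LinearMap.congr_fun hZ2 X
    simpa [LinearMap.comp_apply, LinearMap.add_apply, LinearMap.sub_apply,
      LinearMap.id_apply, hΩ] using h
  have hR1' : ∀ X : Matrix (Fin n) (Fin n) ℂ, R X = X + R (Q * Φ X * Q) := by
    intro X
    have h := LinearMap.congr_fun hR1 X
    have h2 : R X - R (Q * Φ X * Q) = X := by
      simpa [LinearMap.comp_apply, LinearMap.sub_apply, LinearMap.id_apply,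
        map_sub, hQQ] using h
    exact (sub_eq_iff_eq_add.mp h2)
  have hR2' : ∀ X : Matrix (Fin n) (Fin n) ℂ, Q * Φ (R X) * Q = R X - X := by
    intro X
    have h := LinearMap.congr_fun hR2 X
    have h2 : R X - Q * Φ (R X) * Q = X := by
      simpa [LinearMap.comp_apply, LinearMap.sub_apply, LinearMap.id_apply,
        hQQ] using h
    rw [eq_sub_iff_add_eq, add_comm]
    exact (sub_eq_iff_eq_add.mp h2).symm
  set Y : Matrix (Fin n) (Fin n) ℂ := Z ρ with hY
  have hρ1 : (1 - QQ) ρ = ρ := by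
    rw [hone, hQρ, Matrix.zero_mul, sub_zero]
  set W : Matrix (Fin n) (Fin n) ℂ := Y - Q * Y * Q with hWdef
  have hW : ((1 - QQ) ∘ₗ Z ∘ₗ (1 - QQ)) ρ = W := by
    simp only [LinearMap.comp_apply, hρ1, hone, hY, hWdef]
  have hQWQ : Q * W * Q = 0 := by
    have : Q * (Q * Y * Q) * Q = Q * Y * Q := by
      rw [← Matrix.mul_assoc, ← Matrix.mul_assoc, hQidem, Matrix.mul_assoc, hQidem]
    rw [hWdef, Matrix.mul_sub, Matrix.sub_mul, this, sub_self]
  have hW1 : (1 - QQ) W = W := by rw [hone, hQWQ, sub_zero]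
  -- trace of Y is 1
  have hYtr : Y.trace = 1 := by
    have h := congrArg Matrix.trace (hZ' ρ)
    rw [Matrix.trace_add, Matrix.trace_sub, hΦtr, Matrix.trace_smul, hπtr, hρtr] at h
    simpa using h
  -- Φ Y in terms of Y
  have hΦY : Φ Y = Y + Y.trace • π - ρ := by
    have h := hZ' ρ
    rw [← hY] at h
    rw [← h]; abel
  -- main computation
  rw [hW]
  rw [show ((1 - QQ) ∘ₗ K ∘ₗ (1 - QQ)) W = (1 - QQ) (K W) by
    simp only [LinearMap.comp_apply, hW1]]
  have hKW : K W = Φ (R (R W)) := by rw [hK]; rfl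
  rw [hone, hKW, Matrix.trace_sub, hΦtr, hR2' (R W), Matrix.trace_sub]
  -- now goal : (R (R W)).trace - ((R (R W)).trace - (R W).trace) = 1 + (R (Q*π*Q)).trace
  have hRW : (R W).trace = 1 + (R (Q * π * Q)).trace := by
    have e1 : R W = R Y - R (Q * Y * Q) := by rw [hWdef, map_sub]
    have e2 : Q * Φ Y * Q = Q * Y * Q + Y.trace • (Q * π * Q) := by
      rw [hΦY, Matrix.mul_sub, Matrix.sub_mul, Matrix.mul_add, Matrix.add_mul,
        hQρ, Matrix.zero_mul, sub_zero, Matrix.mul_smul, Matrix.smul_mul]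
    have e3 : (R Y).trace = Y.trace + ((R (Q * Y * Q)).trace + Y.trace * (R (Q * π * Q)).trace) := by
      rw [hR1' Y, e2, map_add, LinearMap.map_smul, Matrix.trace_add, Matrix.trace_add, Matrix.trace_smul]
      simp [smul_eq_mul]
    rw [e1, Matrix.trace_sub, e3, hYtr]
    ring
  rw [hRW]; ring


/-- The quantity `Tr((D∘Z)₁₁(ρ_ψ)) = Tr(K₁₁(Z₁₁(ρ_ψ)))` is independent of the
choice of unit vector `ψ` in the subspace `V` (with projection `P`, `Q = I − P`,
`ℚ(X) = QXQ`, `R = (I − ℚ∘Φ)⁻¹`, `K = Φ∘R∘R`, `Z` the fundamental map). -/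
theorem trace_DZ11_independent {n : ℕ}
    (Φ Ω Z QQ R K : Matrix (Fin n) (Fin n) ℂ →ₗ[ℂ] Matrix (Fin n) (Fin n) ℂ)
    (π P Q : Matrix (Fin n) (Fin n) ℂ)
    (hΦpos : ∀ X : Matrix (Fin n) (Fin n) ℂ, X.PosSemidef → (Φ X).PosSemidef)
    (hΦtr : ∀ X : Matrix (Fin n) (Fin n) ℂ, (Φ X).trace = X.trace)
    (hΦirr : ∀ p : Matrix (Fin n) (Fin n) ℂ, p.IsHermitian → p * p = p →
      (∀ X : Matrix (Fin n) (Fin n) ℂ, Φ (p * X * p) = p * Φ (p * X * p) * p) → p = 0 ∨ p = 1)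
    (hπpos : π.PosSemidef) (hπtr : π.trace = 1) (hπinv : Φ π = π)
    (hΩ : ∀ X : Matrix (Fin n) (Fin n) ℂ, Ω X = X.trace • π)
    (hZ1 : Z ∘ₗ (LinearMap.id - Φ + Ω) = LinearMap.id)
    (hZ2 : (LinearMap.id - Φ + Ω) ∘ₗ Z = LinearMap.id)
    (hPherm : P.IsHermitian) (hPidem : P * P = P) (hPne0 : P ≠ 0) (hPne1 : P ≠ 1)
    (hQ : Q = 1 - P)
    (hQQ : ∀ X : Matrix (Fin n) (Fin n) ℂ, QQ X = Q * X * Q)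
    (hR1 : R ∘ₗ (LinearMap.id - QQ ∘ₗ Φ) = LinearMap.id)
    (hR2 : (LinearMap.id - QQ ∘ₗ Φ) ∘ₗ R = LinearMap.id)
    (hK : K = Φ ∘ₗ R ∘ₗ R)
    (ψ ψ' : Fin n → ℂ) (hψ : star ψ ⬝ᵥ ψ = 1) (hψ' : star ψ' ⬝ᵥ ψ' = 1)
    (hψV : P *ᵥ ψ = ψ) (hψ'V : P *ᵥ ψ' = ψ') :
    ((((1 - QQ) ∘ₗ K ∘ₗ (1 - QQ))
        (((1 - QQ) ∘ₗ Z ∘ₗ (1 - QQ)) (Matrix.vecMulVec ψ (star ψ)))).trace) =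
      ((((1 - QQ) ∘ₗ K ∘ₗ (1 - QQ))
        (((1 - QQ) ∘ₗ Z ∘ₗ (1 - QQ)) (Matrix.vecMulVec ψ' (star ψ')))).trace) := by
  rw [trace_DZ11_value Φ Ω Z QQ R K π P Q hΦtr hπtr hΩ hZ2 hPidem hQ hQQ hR1 hR2 hK ψ hψ hψV,
    trace_DZ11_value Φ Ω Z QQ R K π P Q hΦtr hπtr hΩ hZ2 hPidem hQ hQQ hR1 hR2 hK ψ' hψ' hψ'V]
end

section
/- (Classical MHTF for an arbitrary initial probability distribution.) Let 𝒫 = (p_{ij}) be the n×n stochastic matrix of an irreducible finite Markov chain with unique invariant distribution π = (π_i) (so π_i > 0, Σ_i π_i = 1, 𝒫π = π when states evolve by x ↦ 𝒫x), and let Z = (I_n − 𝒫 + π·𝟙ᵀ)⁻¹ be the fundamental matrix (𝟙 the all-ones column vector). Fix a state j and let x = (x_i) be an initial probability distribution. Let Q_j be the diagonal matrix with (Q_j)_{ii} = 1 for i ≠ j and (Q_j)_{jj} = 0. Then the mean hitting time τ(x→j) = Σ_{r≥1} r·(e_jᵀ 𝒫 (Q_j 𝒫)^{r−1} x) converges and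 τ(x→j) = 1 + (Z_{jj} − (Z𝒫x)_j)/π_j. -/
/-!
Write `y_r = (Q_j 𝒫)^r x` and `s_r = 𝟙ᵀ y_r`, the probability that `j` has not been hit by
time `r`. Since `𝟙ᵀ Q_j = 𝟙ᵀ - e_jᵀ` and `𝟙ᵀ 𝒫 = 𝟙ᵀ`, the `r`-th term of the series is
`(r + 1) (s_r - s_{r+1})`, so the mean hitting time is `∑ s_r` once `r s_r → 0`.
From `Z (I - 𝒫 + π𝟙ᵀ) = I` and `Zπ = π` one gets `Z𝒫 = Z - I + π𝟙ᵀ`, and then the vector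
`v_k = 1 + (Z_jj - (Z𝒫)_jk) / π_j` satisfies `vᵀ Q_j 𝒫 = vᵀ - 𝟙ᵀ`. Hence `t_r = vᵀ y_r`
telescopes, `t_{r+1} = t_r - s_r`, and `|t_r| ≤ C s_r`: the partial sums of `s` stay bounded,
so `s_r → 0`, `t_r → 0` and `∑ s_r = t_0 = vᵀ x`.
-/

open Matrix Finset Filter Topology

theorem tendsto_nat_mul_of_antitone_of_summable {a : ℕ → ℝ} (ha : Antitone a)
    (hs : Summable a) : Tendsto (fun n : ℕ => (n : ℝ) * a n) atTop (𝓝 0) := by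
  have ha0 : ∀ n, 0 ≤ a n := fun n =>
    le_of_tendsto hs.tendsto_atTop_zero (eventually_atTop.2 ⟨n, fun _ hm => ha hm⟩)
  -- The `n - n / 2` terms from index `n / 2` to `n - 1` each dominate `a n`.
  have hbound : ∀ n : ℕ, (n : ℝ) * a n ≤ 2 * ∑' k, a (k + n / 2) := by
    intro n
    have hhalf : (n : ℝ) ≤ 2 * (n - n / 2 : ℕ) := by norm_cast; omega
    have htail : ((n - n / 2 : ℕ) : ℝ) * a n ≤ ∑' k, a (k + n / 2) :=
      calc ((n - n / 2 : ℕ) : ℝ) * a n = ∑ k ∈ range (n - n / 2), a n := by simp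
        _ ≤ ∑ k ∈ range (n - n / 2), a (k + n / 2) :=
          sum_le_sum fun k hk => ha (by simp at hk; omega)
        _ ≤ ∑' k, a (k + n / 2) :=
          ((summable_nat_add_iff _).2 hs).sum_le_tsum _ fun k _ => ha0 _
    nlinarith [ha0 n]
  refine squeeze_zero (fun n => mul_nonneg n.cast_nonneg (ha0 n)) hbound ?_
  simpa using
    ((tendsto_sum_nat_add a).comp (Nat.tendsto_div_const_atTop two_ne_zero)).const_mul 2

theorem hasSum_succ_mul_sub_succ {s : ℕ → ℝ} {a : ℝ} (hs : Antitone s) (h : HasSum s a) :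
    HasSum (fun r : ℕ => ((r : ℝ) + 1) * (s r - s (r + 1))) a := by
  have hpartial : ∀ R, ∑ r ∈ range R, ((r : ℝ) + 1) * (s r - s (r + 1))
      = ∑ r ∈ range R, s r - R * s R := by
    intro R
    induction R with
    | zero => simp
    | succ R ih => rw [sum_range_succ, sum_range_succ, ih]; push_cast; ring
  refine (hasSum_iff_tendsto_nat_of_nonneg
    (fun r => mul_nonneg (by positivity) (sub_nonneg.2 (hs r.le_succ))) a).2 ?_
  simp_rw [hpartial]
  simpa using h.tendsto_sum_nat.sub (tendsto_nat_mul_of_antitone_of_summable hs h.summable)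

theorem hasSum_of_telescoping_of_abs_le_mul {s t : ℕ → ℝ} {C : ℝ} (hs0 : ∀ r, 0 ≤ s r)
    (hs : Antitone s) (ht : ∀ r, t (r + 1) = t r - s r) (hts : ∀ r, |t r| ≤ C * s r) :
    HasSum s (t 0) := by
  have hpartial : ∀ R, ∑ r ∈ range R, s r = t 0 - t R := fun R => by
    rw [← sum_range_sub' t R]; exact sum_congr rfl fun r _ => by rw [ht]; ring
  have hsum : Summable s := by
    refine summable_of_sum_range_le hs0 (c := t 0 + |C| * s 0) fun R => ?_
    rw [hpartial]
    have hCs : C * s R ≤ |C| * s 0 :=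
      (mul_le_mul_of_nonneg_right (le_abs_self C) (hs0 R)).trans
        (mul_le_mul_of_nonneg_left (hs R.zero_le) (abs_nonneg C))
    linarith [neg_abs_le (t R), hts R]
  have ht0 : Tendsto t atTop (𝓝 0) :=
    squeeze_zero_norm hts (by simpa using hsum.tendsto_atTop_zero.const_mul C)
  refine (hasSum_iff_tendsto_nat_of_nonneg hs0 _).2 ?_
  simp_rw [hpartial]
  simpa using tendsto_const_nhds.sub ht0

section

variable {ι : Type*} [Fintype ι]

theorem abs_dotProduct_le_of_nonneg (v : ι → ℝ) {y : ι → ℝ} (hy : 0 ≤ y) :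
    |v ⬝ᵥ y| ≤ (∑ k, |v k|) * ∑ k, y k := by
  calc |v ⬝ᵥ y| ≤ ∑ k, |v k| * y k := by
        refine (abs_sum_le_sum_abs _ _).trans_eq (sum_congr rfl fun k _ => ?_)
        rw [abs_mul, abs_of_nonneg (hy k)]
    _ ≤ ∑ k, (∑ i, |v i|) * y k := sum_le_sum fun k _ => mul_le_mul_of_nonneg_right
        (single_le_sum (fun i _ => abs_nonneg (v i)) (mem_univ k)) (hy k)
    _ = (∑ k, |v k|) * ∑ k, y k := by rw [mul_sum]

/-- Evaluated at `k`, this is the right-hand side of the mean hitting time formula for the initial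
distribution `e_k`, since `(Z 𝒫 e_k)_j = (Z * 𝒫) j k`. -/
noncomputable def mhtfVec (P Z : Matrix ι ι ℝ) (π : ι → ℝ) (j : ι) : ι → ℝ :=
  fun k => 1 + (Z j j - (Z * P) j k) / π j

theorem mhtfVec_dotProduct {P Z : Matrix ι ι ℝ} {π : ι → ℝ} {j : ι} {x : ι → ℝ}
    (hx : ∑ i, x i = 1) :
    mhtfVec P Z π j ⬝ᵥ x = 1 + (Z j j - (Z *ᵥ (P *ᵥ x)) j) / π j := by
  rw [mulVec_mulVec]
  simp only [mhtfVec, dotProduct, mulVec, add_mul, sum_add_distrib, one_mul, hx,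
    div_mul_eq_mul_div, ← sum_div, sub_mul, sum_sub_distrib, ← mul_sum, mul_one]

variable [DecidableEq ι]

def killCoord (j : ι) : Matrix ι ι ℝ := diagonal fun i => if i = j then 0 else 1

theorem sum_killCoord_mulVec (j : ι) (u : ι → ℝ) :
    ∑ i, (killCoord j *ᵥ u) i = ∑ i, u i - u j := by
  simp [killCoord, mulVec_diagonal, ite_mul, Finset.sum_ite, Finset.filter_ne']

theorem sum_killCoord_mul_mulVec {P : Matrix ι ι ℝ} (hP : P ∈ colStochastic ℝ ι) (j : ι)
    (u : ι → ℝ) : ∑ i, ((killCoord j * P) *ᵥ u) i = ∑ i, u i - (P *ᵥ u) j := by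
  rw [← mulVec_mulVec, sum_killCoord_mulVec, sum_mulVec_of_mem_colStochastic hP]

theorem killCoord_mul_nonneg {P : Matrix ι ι ℝ} (hP : P ∈ colStochastic ℝ ι) (j i k : ι) :
    0 ≤ (killCoord j * P) i k := by
  rw [killCoord, diagonal_mul]
  exact mul_nonneg (by split_ifs <;> norm_num) (nonneg_of_mem_colStochastic hP)

theorem pow_mulVec_nonneg {A : Matrix ι ι ℝ} (hA : ∀ i k, 0 ≤ A i k) {x : ι → ℝ} (hx : 0 ≤ x)
    (r : ℕ) : 0 ≤ A ^ r *ᵥ x := by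
  induction r with
  | zero => simpa using hx
  | succ r ih =>
    rw [pow_succ', ← mulVec_mulVec]
    exact fun i => sum_nonneg fun k _ => mul_nonneg (hA i k) (ih k)

theorem fundamental_mul_eq {P Z : Matrix ι ι ℝ} {π : ι → ℝ}
    (hZ : Z * (1 - P + vecMulVec π (fun _ => 1)) = 1) (hπ : P *ᵥ π = π)
    (hπsum : ∑ i, π i = 1) :
    Z * P = Z - 1 + vecMulVec π (fun _ => 1) := by
  have hfix : (1 - P + vecMulVec π (fun _ => 1)) *ᵥ π = π := by
    rw [add_mulVec, sub_mulVec, one_mulVec, hπ, vecMulVec_mulVec]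
    ext i
    simp [dotProduct, hπsum]
  have hZπ : Z *ᵥ π = π := by
    conv_lhs => rw [← hfix, mulVec_mulVec, hZ, one_mulVec]
  rw [mul_add, mul_sub, mul_one, mul_vecMulVec, hZπ] at hZ
  rw [← hZ]
  abel

theorem mhtfVec_vecMul_killCoord_mul {P Z : Matrix ι ι ℝ} {π : ι → ℝ} {j : ι}
    (hP : P ∈ colStochastic ℝ ι) (hZP : Z * P = Z - 1 + vecMulVec π (fun _ => 1))
    (hπj : π j ≠ 0) :
    mhtfVec P Z π j ᵥ* (killCoord j * P) = mhtfVec P Z π j - 1 := by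
  have hZPP : Z * P * P = Z * P - P + vecMulVec π (fun _ => 1) := by
    nth_rw 1 [hZP]
    rw [add_mul, sub_mul, vecMulVec_mul, one_mul]
    exact congrArg (Z * P - P + vecMulVec π ·) (one_vecMul_of_mem_colStochastic hP)
  have hjj : (Z * P) j j = Z j j - 1 + π j := by simp [hZP, vecMulVec_apply]
  ext k
  have hrow : ∑ i, (Z * P) j i * P i k = (Z * P) j k - P j k + π j := by
    rw [← mul_apply, hZPP]; simp [vecMulVec_apply]
  have hcol := sum_col_of_mem_colStochastic hP k
  have hvP : ∑ i, mhtfVec P Z π j i * P i k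
      = 1 + (Z j j - ((Z * P) j k - P j k + π j)) / π j := by
    simp only [mhtfVec, add_mul, one_mul, sub_mul, div_mul_eq_mul_div, ← sum_div, sum_add_distrib,
      sum_sub_distrib, ← mul_sum, hcol, hrow, mul_one]
  simp only [vecMul, dotProduct, killCoord, diagonal_mul, mul_ite, mul_zero, ite_mul,
    zero_mul, one_mul, sum_ite, filter_eq', filter_ne', mem_univ, if_true, sum_singleton, zero_add,
    sum_erase_eq_sub (mem_univ j), hvP, Pi.sub_apply, Pi.one_apply]
  simp only [mhtfVec, hjj]
  field_simp
  ring

theorem hasSum_meanHittingTime {P Z : Matrix ι ι ℝ} {π x : ι → ℝ} {j : ι}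
    (hP : P ∈ colStochastic ℝ ι) (hZP : Z * P = Z - 1 + vecMulVec π (fun _ => 1))
    (hπj : π j ≠ 0) (hx : 0 ≤ x) :
    HasSum (fun r : ℕ => ((r : ℝ) + 1) * (P *ᵥ ((killCoord j * P) ^ r *ᵥ x)) j)
      (mhtfVec P Z π j ⬝ᵥ x) := by
  set K := killCoord j * P
  set v := mhtfVec P Z π j
  set s : ℕ → ℝ := fun r => ∑ i, (K ^ r *ᵥ x) i
  have hy : ∀ r, 0 ≤ K ^ r *ᵥ x := pow_mulVec_nonneg (killCoord_mul_nonneg hP j) hx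
  have hstep : ∀ r, K ^ (r + 1) *ᵥ x = K *ᵥ (K ^ r *ᵥ x) := fun r => by
    rw [pow_succ', mulVec_mulVec]
  have hsumK : ∀ u, ∑ i, (K *ᵥ u) i = ∑ i, u i - (P *ᵥ u) j := sum_killCoord_mul_mulVec hP j
  have hvK : v ᵥ* K = v - 1 := mhtfVec_vecMul_killCoord_mul hP hZP hπj
  have hhit : ∀ r, (P *ᵥ (K ^ r *ᵥ x)) j = s r - s (r + 1) := fun r => by
    simp only [s, hstep, hsumK]
    ring
  have hanti : Antitone s := antitone_nat_of_succ_le fun r => by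
    linarith [hhit r, nonneg_mulVec_of_mem_colStochastic hP (hy r) j]
  have ht : ∀ r, v ⬝ᵥ (K ^ (r + 1) *ᵥ x) = v ⬝ᵥ (K ^ r *ᵥ x) - s r := fun r => by
    rw [hstep, dotProduct_mulVec, hvK, sub_dotProduct, one_dotProduct]
  have hsum : HasSum s (v ⬝ᵥ x) := by
    simpa only [pow_zero, one_mulVec] using hasSum_of_telescoping_of_abs_le_mul (fun r => sum_nonneg fun i _ => hy r i) hanti
      ht fun r => abs_dotProduct_le_of_nonneg v (hy r)
  simpa only [hhit] using hasSum_succ_mul_sub_succ hanti hsum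

end

theorem classical_mhtf_initial_distribution_general {n : ℕ}
    (Pm Z : Matrix (Fin n) (Fin n) ℝ) (π x : Fin n → ℝ) (j : Fin n)
    (hPnn : ∀ i k, 0 ≤ Pm i k)
    (hPstoch : ∀ k, ∑ i, Pm i k = 1)
    (hπpos : ∀ i, 0 < π i) (hπsum : ∑ i, π i = 1)
    (hπinv : Pm *ᵥ π = π)
    (hZ1 : Z * (1 - Pm + Matrix.vecMulVec π (fun _ => 1)) = 1)
    (hxnn : ∀ i, 0 ≤ x i) (hxsum : ∑ i, x i = 1) :
    HasSum (fun r : ℕ => ((r : ℝ) + 1) *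
        (Pm *ᵥ (((Matrix.diagonal (fun i => if i = j then 0 else 1) * Pm) ^ r) *ᵥ x)) j)
      (1 + (Z j j - (Z *ᵥ (Pm *ᵥ x)) j) / π j) := by
  have hP : Pm ∈ colStochastic ℝ (Fin n) := mem_colStochastic_iff_sum.2 ⟨hPnn, hPstoch⟩
  rw [← mhtfVec_dotProduct hxsum]
  exact hasSum_meanHittingTime hP (fundamental_mul_eq hZ1 hπinv hπsum) (hπpos j).ne' hxnn

/-- Classical MHTF for an arbitrary initial probability distribution:
for an irreducible column-stochastic matrix `𝒫` with invariant distribution `π`,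
fundamental matrix `Z = (I − 𝒫 + π𝟙ᵀ)⁻¹`, a state `j` and an initial distribution `x`,
the mean hitting time `τ(x→j) = Σ_{r≥1} r·(e_jᵀ 𝒫 (Q_j 𝒫)^{r−1} x)` converges and
equals `1 + (Z_{jj} − (Z𝒫x)_j)/π_j`, where `Q_j` kills the `j`-th coordinate. -/
theorem classical_mhtf_initial_distribution {n : ℕ}
    (Pm Z : Matrix (Fin n) (Fin n) ℝ) (π x : Fin n → ℝ) (j : Fin n)
    (hPnn : ∀ i k, 0 ≤ Pm i k)
    (hPstoch : ∀ k, ∑ i, Pm i k = 1)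
    (hirr : ∀ i k, ∃ r : ℕ, 1 ≤ r ∧ 0 < (Pm ^ r) i k)
    (hπpos : ∀ i, 0 < π i) (hπsum : ∑ i, π i = 1)
    (hπinv : Pm *ᵥ π = π)
    (hZ1 : Z * (1 - Pm + Matrix.vecMulVec π (fun _ => 1)) = 1)
    (hZ2 : (1 - Pm + Matrix.vecMulVec π (fun _ => 1)) * Z = 1)
    (hxnn : ∀ i, 0 ≤ x i) (hxsum : ∑ i, x i = 1) :
    HasSum (fun r : ℕ => ((r : ℝ) + 1) *
        (Pm *ᵥ (((Matrix.diagonal (fun i => if i = j then 0 else 1) * Pm) ^ r) *ᵥ x)) j)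
      (1 + (Z j j - (Z *ᵥ (Pm *ᵥ x)) j) / π j) :=
  classical_mhtf_initial_distribution_general Pm Z π x j hPnn hPstoch hπpos hπsum hπinv hZ1 hxnn
    hxsum
end

section
/- (Classical MHTF for an arrival subset of states.) Let 𝒫 = (p_{ij}) be the n×n stochastic matrix of an irreducible finite Markov chain with unique invariant distribution π, and let Z = (I_n − 𝒫 + π·𝟙ᵀ)⁻¹ be the fundamental matrix. Let S ⊆ {1,…,n} be nonempty with complement nonempty, let Q_S be the diagonal 0-1 matrix with (Q_S)_{ii} = 0 for i ∈ S and 1 otherwise, and P_S = I_n − Q_S. For a state i, define τ(i→S) = Σ_{r≥1} r·(𝟙ᵀ P_S 𝒫 (Q_S 𝒫)^{r−1} e_i), the mean time of first visit to S starting at i. Then for every i ∉ S and every j ∈ S: τ(i→S) = Σ_{k∈S} (Z_{kj} − Z_{ki})·τ(k→S). In particular, the sum Σ_{k∈S} Z_{kj}·τ(k→S) is independent of the choice of j ∈ S. -/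
open Matrix Finset Filter Topology

/-- Classical MHTF for an arrival subset of states: for an irreducible
column-stochastic matrix `Pm` (the paper's `𝒫`) with invariant distribution `π` and
fundamental matrix `Z = (I − 𝒫 + π𝟙ᵀ)⁻¹`, and a nontrivial subset `S` of states with
`τ(m→S) = Σ_{r≥1} r·(𝟙ᵀ P_S 𝒫 (Q_S 𝒫)^{r−1} e_m)`: for every `i ∉ S` and `j ∈ S`,
`τ(i→S) = Σ_{k∈S} (Z_{kj} − Z_{ki})·τ(k→S)`; in particular `Σ_{k∈S} Z_{kj}·τ(k→S)` is
independent of the choice of `j ∈ S`. -/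
theorem classical_mhtf_subset {n : ℕ}
    (Pm Z QS PS : Matrix (Fin n) (Fin n) ℝ) (π : Fin n → ℝ) (S : Finset (Fin n))
    (τ : Fin n → ℝ)
    (hPnn : ∀ i k, 0 ≤ Pm i k)
    (hPstoch : ∀ k, ∑ i, Pm i k = 1)
    (hirr : ∀ i k, ∃ r : ℕ, 1 ≤ r ∧ 0 < (Pm ^ r) i k)
    (hπpos : ∀ i, 0 < π i) (hπsum : ∑ i, π i = 1)
    (hπinv : Pm *ᵥ π = π)
    (hZ1 : Z * (1 - Pm + Matrix.vecMulVec π (fun _ => 1)) = 1)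
    (hZ2 : (1 - Pm + Matrix.vecMulVec π (fun _ => 1)) * Z = 1)
    (hS : S.Nonempty) (hSc : Sᶜ.Nonempty)
    (hQS : QS = Matrix.diagonal (fun i => if i ∈ S then 0 else 1))
    (hPS : PS = 1 - QS)
    (hτ : ∀ m : Fin n, HasSum (fun r : ℕ => ((r : ℝ) + 1) *
      ((fun _ => (1 : ℝ)) ⬝ᵥ (PS *ᵥ (Pm *ᵥ (((QS * Pm) ^ r) *ᵥ Pi.single m 1))))) (τ m)) :
    (∀ i ∉ S, ∀ j ∈ S, τ i = ∑ k ∈ S, (Z k j - Z k i) * τ k) ∧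
      (∀ j ∈ S, ∀ j' ∈ S, ∑ k ∈ S, Z k j * τ k = ∑ k ∈ S, Z k j' * τ k) := by
  classical
  set M : Matrix (Fin n) (Fin n) ℝ := QS * Pm with hMdef
  have hMentry : ∀ k m, M k m = if k ∈ S then 0 else Pm k m := by
    intro k m
    rw [hMdef, hQS, Matrix.diagonal_mul]
    by_cases h : k ∈ S <;> simp [h]
  have hMnn : ∀ k m, 0 ≤ M k m := by
    intro k m; rw [hMentry]; split
    · exact le_refl 0
    · exact hPnn k m
  have hMle : ∀ k m, M k m ≤ Pm k m := by
    intro k m; rw [hMentry]; split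
    · exact hPnn k m
    · exact le_refl _
  have hMpow_nn : ∀ r k m, 0 ≤ (M ^ r) k m := by
    intro r
    induction r with
    | zero =>
      intro k m
      rw [pow_zero, Matrix.one_apply]
      split <;> norm_num
    | succ r ih =>
      intro k m
      rw [pow_succ, Matrix.mul_apply]
      exact Finset.sum_nonneg fun j _ => mul_nonneg (ih k j) (hMnn j m)
  have hPpow_nn : ∀ r k m, 0 ≤ (Pm ^ r) k m := by
    intro r
    induction r with
    | zero =>
      intro k m
      rw [pow_zero, Matrix.one_apply]
      split <;> norm_num
    | succ r ih =>
      intro k m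
      rw [pow_succ, Matrix.mul_apply]
      exact Finset.sum_nonneg fun j _ => mul_nonneg (ih k j) (hPnn j m)
  have hPSentry : ∀ i j, PS i j = (if i = j then (if i ∈ S then 1 else 0) else 0 : ℝ) := by
    intro i j
    rw [hPS, hQS, Matrix.sub_apply, Matrix.one_apply, Matrix.diagonal_apply]
    by_cases h : i = j
    · subst h
      by_cases h2 : i ∈ S <;> simp [h2]
    · simp [h]
  have hPSnn : ∀ i j, 0 ≤ PS i j := by
    intro i j; rw [hPSentry]
    split
    · split <;> norm_num
    · exact le_refl 0
  -- column sums after multiplication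
  have hmulcol : ∀ (A B : Matrix (Fin n) (Fin n) ℝ) m,
      ∑ i, (A * B) i m = ∑ k, B k m * (∑ i, A i k) := by
    intro A B m
    simp only [Matrix.mul_apply]
    rw [Finset.sum_comm]
    exact Finset.sum_congr rfl fun k _ => by rw [← Finset.sum_mul, mul_comm]
  have hcolsum : ∀ (X : Matrix (Fin n) (Fin n) ℝ) m, ∑ i, (Pm * X) i m = ∑ k, X k m := by
    intro X m
    rw [hmulcol]
    exact Finset.sum_congr rfl fun k _ => by rw [hPstoch k, mul_one]
  set G : ℕ → Fin n → ℝ := fun r m => ∑ k, (M ^ r) k m with hGdef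
  set F : ℕ → Fin n → ℝ := fun r m => ∑ k, ((PS * Pm) * M ^ r) k m with hFdef
  have hτ' : ∀ m, HasSum (fun r : ℕ => ((r : ℝ) + 1) * F r m) (τ m) := by
    intro m
    have : ∀ r : ℕ, ((fun _ => (1 : ℝ)) ⬝ᵥ (PS *ᵥ (Pm *ᵥ ((M ^ r) *ᵥ Pi.single m 1)))) = F r m := by
      intro r
      rw [Matrix.mulVec_mulVec, Matrix.mulVec_mulVec]
      simp [dotProduct, Matrix.mulVec, Pi.single_apply, hFdef]
    have h := hτ m
    simp only [this] at h
    exact h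
  have hFnn : ∀ r m, 0 ≤ F r m := by
    intro r m
    refine Finset.sum_nonneg fun i _ => ?_
    rw [Matrix.mul_apply]
    refine Finset.sum_nonneg fun k _ => mul_nonneg ?_ (hMpow_nn r k m)
    rw [Matrix.mul_apply]
    exact Finset.sum_nonneg fun j _ => mul_nonneg (hPSnn i j) (hPnn j k)
  have hGnn : ∀ r m, 0 ≤ G r m := fun r m => Finset.sum_nonneg fun k _ => hMpow_nn r k m
  have hG0 : ∀ m, G 0 m = 1 := by
    intro m
    simp [hGdef, Matrix.one_apply]
  have hFG : ∀ r m, F r m = G r m - G (r + 1) m := by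
    intro r m
    have h1 : (PS * Pm) * M ^ r = Pm * M ^ r - M ^ (r + 1) := by
      rw [hPS, Matrix.sub_mul, Matrix.one_mul, Matrix.sub_mul, pow_succ']
    have h2 : F r m = ∑ k, ((Pm * M ^ r) k m - (M ^ (r+1)) k m) := by
      rw [hFdef]
      refine Finset.sum_congr rfl fun k _ => ?_
      rw [h1, Matrix.sub_apply]
    rw [h2, Finset.sum_sub_distrib, hcolsum]
  have hGrec : ∀ r m, G (r + 1) m = ∑ k, M k m * G r k := by
    intro r m
    have : G (r+1) m = ∑ i, (M ^ r * M) i m := by rw [hGdef]; simp [pow_succ]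
    rw [this, hmulcol]
  have hFrec : ∀ r m, F (r + 1) m = ∑ k, M k m * F r k := by
    intro r m
    have : F (r+1) m = ∑ i, (((PS * Pm) * M ^ r) * M) i m := by
      rw [hFdef]
      simp [pow_succ, Matrix.mul_assoc]
    rw [this, hmulcol]
  have hFsum : ∀ m, Summable (fun r => F r m) := by
    intro m
    refine Summable.of_nonneg_of_le (fun r => hFnn r m) (fun r => ?_) (hτ' m).summable
    nlinarith [hFnn r m, (Nat.cast_nonneg r : (0:ℝ) ≤ (r:ℝ))]
  set σ : Fin n → ℝ := fun m => ∑' r, F r m with hσdef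
  have hσ : ∀ m, HasSum (fun r => F r m) (σ m) := fun m => (hFsum m).hasSum
  have hpartial : ∀ (N : ℕ) m, ∑ r ∈ Finset.range N, F r m = 1 - G N m := by
    intro N m
    calc ∑ r ∈ Finset.range N, F r m = ∑ r ∈ Finset.range N, (G r m - G (r+1) m) :=
          Finset.sum_congr rfl fun r _ => hFG r m
      _ = G 0 m - G N m := Finset.sum_range_sub' (fun r => G r m) N
      _ = 1 - G N m := by rw [hG0]
  set L : Fin n → ℝ := fun m => 1 - σ m with hLdef
  have hGtend : ∀ m, Tendsto (fun N => G N m) atTop (𝓝 (L m)) := by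
    intro m
    have h1 := (hσ m).tendsto_sum_nat
    have h2 : Tendsto (fun N => 1 - ∑ r ∈ Finset.range N, F r m) atTop (𝓝 (1 - σ m)) :=
      tendsto_const_nhds.sub h1
    have h3 : (fun N => 1 - ∑ r ∈ Finset.range N, F r m) = fun N => G N m := by
      funext N; rw [hpartial]; ring
    rw [h3] at h2
    exact h2
  have hLnn : ∀ m, 0 ≤ L m := fun m => ge_of_tendsto' (hGtend m) (fun N => hGnn N m)
  have hLrec : ∀ m, L m = ∑ k, M k m * L k := by
    intro m
    have h1 : Tendsto (fun N : ℕ => G (N + 1) m) atTop (𝓝 (L m)) :=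
      (hGtend m).comp (tendsto_add_atTop_nat 1)
    have h2 : Tendsto (fun N : ℕ => ∑ k, M k m * G N k) atTop (𝓝 (∑ k, M k m * L k)) :=
      tendsto_finset_sum _ fun k _ => (hGtend k).const_mul (M k m)
    have h3 : (fun N : ℕ => G (N + 1) m) = fun N : ℕ => ∑ k, M k m * G N k :=
      funext fun N => hGrec N m
    rw [h3] at h1
    exact tendsto_nhds_unique h1 h2
  have hMπ : ∀ k, ∑ m, M k m * π m = if k ∈ S then 0 else π k := by
    intro k
    by_cases h : k ∈ S
    · simp [hMentry, h]
    · simp only [hMentry, h, if_false]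
      have h2 := congrFun hπinv k
      simpa [Matrix.mulVec, dotProduct] using h2
  have hLS : ∀ k ∈ S, L k = 0 := by
    have e1 : ∑ m, π m * L m = ∑ k, (if k ∈ S then 0 else π k * L k) := by
      calc ∑ m, π m * L m = ∑ m, π m * ∑ k, M k m * L k :=
            Finset.sum_congr rfl fun m _ => by rw [← hLrec m]
        _ = ∑ m, ∑ k, π m * (M k m * L k) := by
            refine Finset.sum_congr rfl fun m _ => ?_
            rw [Finset.mul_sum]
        _ = ∑ k, ∑ m, π m * (M k m * L k) := Finset.sum_comm
        _ = ∑ k, (∑ m, M k m * π m) * L k := by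
            refine Finset.sum_congr rfl fun k _ => ?_
            rw [Finset.sum_mul]
            exact Finset.sum_congr rfl fun m _ => by ring
        _ = ∑ k, (if k ∈ S then 0 else π k * L k) := by
            refine Finset.sum_congr rfl fun k _ => ?_
            rw [hMπ k]
            by_cases h : k ∈ S <;> simp [h]
    have e2 : ∑ k, (if k ∈ S then π k * L k else 0) = 0 := by
      have e3 : ∑ m, π m * L m =
          (∑ k, (if k ∈ S then π k * L k else 0)) + ∑ k, (if k ∈ S then 0 else π k * L k) := by
        rw [← Finset.sum_add_distrib]
        refine Finset.sum_congr rfl fun k _ => by by_cases h : k ∈ S <;> simp [h]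
      rw [e1] at e3
      linarith
    intro k hk
    have hnn : ∀ i ∈ Finset.univ, (0:ℝ) ≤ (if i ∈ S then π i * L i else 0) := by
      intro i _
      by_cases h : i ∈ S <;> simp [h]
      exact mul_nonneg (hπpos i).le (hLnn i)
    have h4 := (Finset.sum_eq_zero_iff_of_nonneg hnn).mp e2 k (Finset.mem_univ k)
    rw [if_pos hk] at h4
    rcases mul_eq_zero.mp h4 with h | h
    · exact absurd h (hπpos k).ne'
    · exact h
  -- E r m := ∑ k, L k * (Pm^r) k m ; show L = 0 everywhere
  set E : ℕ → Fin n → ℝ := fun r m => ∑ k, L k * (Pm ^ r) k m with hEdef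
  have hE0 : ∀ m, E 0 m = L m := by
    intro m
    simp [hEdef, Matrix.one_apply]
  have hErec : ∀ r m, E (r + 1) m = ∑ j, Pm j m * E r j := by
    intro r m
    simp only [hEdef, pow_succ, Matrix.mul_apply, Finset.mul_sum]
    rw [Finset.sum_comm]
    exact Finset.sum_congr rfl fun j _ => Finset.sum_congr rfl fun k _ => by ring
  have hLPm : ∀ m, L m ≤ ∑ k, L k * Pm k m := by
    intro m
    rw [hLrec m]
    refine Finset.sum_le_sum fun k _ => ?_
    rw [mul_comm (M k m)]
    exact mul_le_mul_of_nonneg_left (hMle k m) (hLnn k)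
  have hEge : ∀ r m, L m ≤ E r m := by
    intro r
    induction r with
    | zero => intro m; rw [hE0]
    | succ r ih =>
      intro m
      rw [hErec]
      calc L m ≤ ∑ k, L k * Pm k m := hLPm m
        _ ≤ ∑ j, Pm j m * E r j := by
            refine Finset.sum_le_sum fun j _ => ?_
            rw [mul_comm (L j)]
            exact mul_le_mul_of_nonneg_left (ih j) (hPnn j m)
  have hπpow : ∀ r : ℕ, (Pm ^ r) *ᵥ π = π := by
    intro r
    induction r with
    | zero => simp
    | succ r ih => rw [pow_succ', ← Matrix.mulVec_mulVec, ih, hπinv]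
  have hEπ : ∀ r, ∑ m, π m * E r m = ∑ k, π k * L k := by
    intro r
    have hk : ∀ k, ∑ m, (Pm ^ r) k m * π m = π k := by
      intro k
      have := congrFun (hπpow r) k
      simpa [Matrix.mulVec, dotProduct] using this
    calc ∑ m, π m * E r m = ∑ m, ∑ k, π m * (L k * (Pm ^ r) k m) := by
          refine Finset.sum_congr rfl fun m _ => ?_
          rw [hEdef]
          rw [Finset.mul_sum]
      _ = ∑ k, ∑ m, π m * (L k * (Pm ^ r) k m) := Finset.sum_comm
      _ = ∑ k, L k * ∑ m, (Pm ^ r) k m * π m := by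
          refine Finset.sum_congr rfl fun k _ => ?_
          rw [Finset.mul_sum]
          exact Finset.sum_congr rfl fun m _ => by ring
      _ = ∑ k, π k * L k := by
          refine Finset.sum_congr rfl fun k _ => ?_
          rw [hk k]; ring
  have hEL : ∀ r m, E r m = L m := by
    intro r m
    have hzero : ∑ i, π i * (E r i - L i) = 0 := by
      have : ∑ i, π i * (E r i - L i) = ∑ i, π i * E r i - ∑ i, π i * L i := by
        rw [← Finset.sum_sub_distrib]
        exact Finset.sum_congr rfl fun i _ => by ring
      rw [this, hEπ r]
      ring
    have hnn : ∀ i ∈ Finset.univ, (0:ℝ) ≤ π i * (E r i - L i) := fun i _ =>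
      mul_nonneg (hπpos i).le (sub_nonneg.mpr (hEge r i))
    have h4 := (Finset.sum_eq_zero_iff_of_nonneg hnn).mp hzero m (Finset.mem_univ m)
    rcases mul_eq_zero.mp h4 with h | h
    · exact absurd h (hπpos m).ne'
    · linarith
  have hL0 : ∀ m, L m = 0 := by
    intro m
    obtain ⟨j, hj⟩ := hS
    obtain ⟨r, _, hrpos⟩ := hirr m j
    have hEj : ∑ k, L k * (Pm ^ r) k j = 0 := by
      have := hEL r j
      rw [hLS j hj] at this
      simpa [hEdef] using this
    have hterm : ∀ k ∈ Finset.univ, (0:ℝ) ≤ L k * (Pm ^ r) k j := fun k _ =>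
      mul_nonneg (hLnn k) (hPpow_nn r k j)
    have h4 := (Finset.sum_eq_zero_iff_of_nonneg hterm).mp hEj m (Finset.mem_univ m)
    rcases mul_eq_zero.mp h4 with h | h
    · exact h
    · exact absurd h hrpos.ne'
  have hσ1 : ∀ m, σ m = 1 := by
    intro m
    have h : 1 - σ m = 0 := hL0 m
    linarith
  -- key recursion for τ
  have hF0M : ∀ m, F 0 m + ∑ k, M k m = 1 := by
    intro m
    have hPQ : PS * Pm + M = Pm := by
      rw [hPS, hMdef, Matrix.sub_mul, Matrix.one_mul, sub_add_cancel]
    have h1 : F 0 m + ∑ k, M k m = ∑ k, (PS * Pm + M) k m := by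
      rw [hFdef]
      simp only [pow_zero, Matrix.mul_one, Matrix.add_apply]
      rw [Finset.sum_add_distrib]
    rw [hPQ] at h1
    rw [h1, hPstoch m]
  have hkey : ∀ m, τ m = 1 + ∑ k, M k m * τ k := by
    intro m
    have h2 : HasSum (fun r : ℕ => ((r:ℝ) + 1) * F r m)
        ((τ m - F 0 m) + ∑ i ∈ Finset.range 1, ((i:ℝ) + 1) * F i m) := by
      have : (τ m - F 0 m) + ∑ i ∈ Finset.range 1, ((i:ℝ) + 1) * F i m = τ m := by
        simp
      rw [this]
      exact hτ' m
    have h3 := (hasSum_nat_add_iff (f := fun r : ℕ => ((r:ℝ) + 1) * F r m) 1).mpr h2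
    have h1 : HasSum (fun r : ℕ => ((r:ℝ) + 2) * F (r + 1) m) (τ m - F 0 m) := by
      have he : (fun r : ℕ => (((r + 1 : ℕ):ℝ) + 1) * F (r + 1) m)
          = fun r : ℕ => ((r:ℝ) + 2) * F (r + 1) m := by
        funext r; push_cast; ring
      rw [← he]
      exact h3
    have h4 : HasSum (fun r : ℕ => ∑ k, M k m * (((r:ℝ) + 1) * F r k + F r k))
        (∑ k, M k m * (τ k + σ k)) :=
      hasSum_sum fun k _ => ((hτ' k).add (hσ k)).mul_left (M k m)
    have h5 : (fun r : ℕ => ((r:ℝ) + 2) * F (r + 1) m)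
        = fun r : ℕ => ∑ k, M k m * (((r:ℝ) + 1) * F r k + F r k) := by
      funext r
      rw [hFrec r m, Finset.mul_sum]
      exact Finset.sum_congr rfl fun k _ => by ring
    rw [h5] at h1
    have h6 : τ m - F 0 m = ∑ k, M k m * (τ k + σ k) := h1.unique h4
    have h7 : ∑ k, M k m * (τ k + σ k) = (∑ k, M k m * τ k) + ∑ k, M k m := by
      rw [← Finset.sum_add_distrib]
      refine Finset.sum_congr rfl fun k _ => ?_
      rw [hσ1 k]; ring
    have h8 := hF0M m
    rw [h7] at h6
    linarith
  -- fundamental matrix facts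
  have hAcol : ∀ k, ∑ i, ((1 - Pm + Matrix.vecMulVec π (fun _ => 1) : Matrix (Fin n) (Fin n) ℝ)) i k = 1 := by
    intro k
    simp only [Matrix.add_apply, Matrix.sub_apply, Matrix.vecMulVec_apply, Matrix.one_apply,
      mul_one]
    rw [Finset.sum_add_distrib, Finset.sum_sub_distrib, hPstoch k, hπsum]
    simp
  have hZcol : ∀ j, ∑ k, Z k j = 1 := by
    intro j
    have h1 : ∑ i, (((1 - Pm + Matrix.vecMulVec π fun _ => 1) : Matrix (Fin n) (Fin n) ℝ) * Z) i j
        = 1 := by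
      rw [hZ2]
      simp [Matrix.one_apply]
    rw [hmulcol] at h1
    calc ∑ k, Z k j
        = ∑ k, Z k j * ∑ i, ((1 - Pm + Matrix.vecMulVec π fun _ => 1 : Matrix (Fin n) (Fin n) ℝ)) i k := by
          refine Finset.sum_congr rfl fun k _ => ?_
          rw [hAcol k, mul_one]
      _ = 1 := h1
  have hPZ : ∀ k i, (Pm * Z) k i = Z k i - (if k = i then 1 else 0) + π k := by
    intro k i
    have h : (((1 - Pm + Matrix.vecMulVec π fun _ => 1) : Matrix (Fin n) (Fin n) ℝ) * Z) k i
        = (1 : Matrix (Fin n) (Fin n) ℝ) k i := by rw [hZ2]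
    rw [Matrix.mul_apply] at h
    have hx : ∑ j, ((1 - Pm + Matrix.vecMulVec π fun _ => 1 : Matrix (Fin n) (Fin n) ℝ)) k j * Z j i
        = Z k i - (Pm * Z) k i + π k := by
      simp only [Matrix.add_apply, Matrix.sub_apply, Matrix.one_apply, Matrix.vecMulVec_apply,
        mul_one, sub_mul, add_mul, ite_mul, one_mul, zero_mul]
      rw [Finset.sum_add_distrib, Finset.sum_sub_distrib, ← Finset.mul_sum, hZcol, mul_one,
        ← Matrix.mul_apply]
      simp
    rw [hx, Matrix.one_apply] at h
    by_cases hki : k = i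
    · rw [if_pos hki] at h ⊢; linarith
    · rw [if_neg hki] at h ⊢; linarith
  -- master identity
  have hmaster : ∀ i, (∑ k, (if k ∈ S then Z k i * τ k else 0)) + (if i ∈ S then 0 else τ i)
      = 1 + ∑ k, (if k ∈ S then 0 else π k * τ k) := by
    intro i
    have e2 : ∑ m, Z m i * τ m = 1 + ∑ m, ∑ k, Z m i * (M k m * τ k) := by
      calc ∑ m, Z m i * τ m = ∑ m, (Z m i + ∑ k, Z m i * (M k m * τ k)) := by
            refine Finset.sum_congr rfl fun m _ => ?_
            rw [hkey m, mul_add, mul_one, Finset.mul_sum]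
        _ = (∑ m, Z m i) + ∑ m, ∑ k, Z m i * (M k m * τ k) := Finset.sum_add_distrib
        _ = 1 + ∑ m, ∑ k, Z m i * (M k m * τ k) := by rw [hZcol i]
    have e3 : ∑ m, ∑ k, Z m i * (M k m * τ k)
        = ∑ k, (if k ∈ S then 0 else τ k * (Z k i - (if k = i then 1 else 0) + π k)) := by
      rw [Finset.sum_comm]
      refine Finset.sum_congr rfl fun k _ => ?_
      by_cases hk : k ∈ S
      · simp [hMentry, hk]
      · simp only [hMentry, hk, if_false]
        have h1 : ∑ m, Z m i * (Pm k m * τ k) = τ k * ∑ m, Pm k m * Z m i := by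
          rw [Finset.mul_sum]
          exact Finset.sum_congr rfl fun m _ => by ring
        rw [h1]
        have h2 : ∑ m, Pm k m * Z m i = (Pm * Z) k i := (Matrix.mul_apply).symm
        rw [h2, hPZ k i]
    have e4 : ∑ k, (if k ∈ S then 0 else τ k * (if k = i then (1:ℝ) else 0))
        = (if i ∈ S then 0 else τ i) := by
      rw [Finset.sum_eq_single i]
      · by_cases hi : i ∈ S <;> simp [hi]
      · intro k _ hk
        by_cases h : k ∈ S <;> simp [h, hk]
      · simp
    have esplit : ∑ m, Z m i * τ m
        = (∑ m, (if m ∈ S then Z m i * τ m else 0)) + ∑ m, (if m ∈ S then 0 else Z m i * τ m) := by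
      rw [← Finset.sum_add_distrib]
      refine Finset.sum_congr rfl fun m _ => by by_cases h : m ∈ S <;> simp [h]
    have eexp : ∑ k, (if k ∈ S then 0 else τ k * (Z k i - (if k = i then 1 else 0) + π k))
        = (∑ k, (if k ∈ S then 0 else Z k i * τ k))
          - (∑ k, (if k ∈ S then 0 else τ k * (if k = i then (1:ℝ) else 0)))
          + ∑ k, (if k ∈ S then 0 else π k * τ k) := by
      have hterm : ∀ k, (if k ∈ S then 0 else τ k * (Z k i - (if k = i then 1 else 0) + π k))
          = (if k ∈ S then 0 else Z k i * τ k)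
            - (if k ∈ S then 0 else τ k * (if k = i then (1:ℝ) else 0))
            + (if k ∈ S then 0 else π k * τ k) := by
        intro k
        by_cases h : k ∈ S
        · simp [h]
        · simp only [h, if_false]
          ring
      simp_rw [hterm]
      rw [Finset.sum_add_distrib, Finset.sum_sub_distrib]
    rw [e3, eexp, e4] at e2
    rw [esplit] at e2
    linarith
  -- convert ite-sums over univ to sums over S
  have hconv : ∀ (f : Fin n → ℝ), (∑ k, (if k ∈ S then f k else 0)) = ∑ k ∈ S, f k := by
    intro f
    rw [Finset.sum_ite_mem, Finset.univ_inter]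
  constructor
  · intro i hi j hj
    have h1 := hmaster i
    have h2 := hmaster j
    rw [if_neg hi, hconv (fun k => Z k i * τ k)] at h1
    rw [if_pos hj, add_zero, hconv (fun k => Z k j * τ k)] at h2
    have h3 : ∑ k ∈ S, (Z k j - Z k i) * τ k = (∑ k ∈ S, Z k j * τ k) - ∑ k ∈ S, Z k i * τ k := by
      rw [← Finset.sum_sub_distrib]
      exact Finset.sum_congr rfl fun k _ => by ring
    rw [h3]
    linarith
  · intro j hj j' hj'
    have h1 := hmaster j
    have h2 := hmaster j'
    rw [if_pos hj, add_zero, hconv (fun k => Z k j * τ k)] at h1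
    rw [if_pos hj', add_zero, hconv (fun k => Z k j' * τ k)] at h2
    linarith
end
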